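/- arXiv:1208.0250 — 11 statements merged into one kernel-verified Lean document; each statement's English description precedes it below -/
import Mathlib

section
/- For every positive integer n, f(n) = ((n+1)/(2n))·f(n-1) + 1, where f(n) = ∑_{k=0}^{n} C(n,k)^{-1} is the sum of reciprocals of binomial coefficients (a rational number). -/
def f (n : ℕ) : ℚ := ∑ k ∈ Finset.range (n + 1), ((n.choose k : ℚ))⁻¹

lemma key (m k : ℕ) (hk : k ≤ m) :
    (((m+1).choose k : ℚ))⁻¹ + (((m+1).choose (k+1) : ℚ))⁻¹
      = ((m + 2 : ℚ) / (m + 1)) * ((m.choose k : ℚ))⁻¹ := by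
  obtain ⟨j, rfl⟩ := Nat.exists_eq_add_of_le hk
  rw [Nat.cast_choose ℚ (by omega : k ≤ k + j),
    Nat.cast_choose ℚ (by omega : k ≤ k + j + 1),
    Nat.cast_choose ℚ (by omega : k + 1 ≤ k + j + 1)]
  have h1 : k + j - k = j := by omega
  have h2 : k + j + 1 - k = j + 1 := by omega
  have h3 : k + j + 1 - (k + 1) = j := by omega
  rw [h1, h2, h3]
  have e1 : (k + j + 1).factorial = (k + j + 1) * (k + j).factorial := Nat.factorial_succ _
  have e2 : (j + 1).factorial = (j + 1) * j.factorial := Nat.factorial_succ _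
  have e3 : (k + 1).factorial = (k + 1) * k.factorial := Nat.factorial_succ _
  have p1 : ((k.factorial : ℚ)) ≠ 0 := by positivity
  have p2 : ((j.factorial : ℚ)) ≠ 0 := by positivity
  have p3 : (((k + j).factorial : ℚ)) ≠ 0 := by positivity
  have p4 : ((k : ℚ) + j + 1) ≠ 0 := by positivity
  rw [e1, e2, e3]
  push_cast
  field_simp
  ring

theorem stmt_0 (n : ℕ) (hn : 1 ≤ n) :
    f n = ((n + 1 : ℚ) / (2 * n)) * f (n - 1) + 1 := by
  obtain ⟨m, rfl⟩ : ∃ m, n = m + 1 := ⟨n - 1, by omega⟩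
  simp only [Nat.add_sub_cancel]
  have hsum : ∑ k ∈ Finset.range (m + 1),
      ((((m+1).choose k : ℚ))⁻¹ + (((m+1).choose (k+1) : ℚ))⁻¹)
      = ((m + 2 : ℚ) / (m + 1)) * f m := by
    rw [f, Finset.mul_sum]
    exact Finset.sum_congr rfl fun k hk => key m k (by
      simpa using Nat.lt_succ_iff.mp (Finset.mem_range.mp hk))
  rw [Finset.sum_add_distrib] at hsum
  have hA : ∑ k ∈ Finset.range (m + 1), (((m+1).choose k : ℚ))⁻¹ = f (m+1) - 1 := by
    rw [f, Finset.sum_range_succ _ (m+1), Nat.choose_self]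
    push_cast; ring
  have hB : ∑ k ∈ Finset.range (m + 1), (((m+1).choose (k+1) : ℚ))⁻¹ = f (m+1) - 1 := by
    rw [f, Finset.sum_range_succ' _ (m+1)]
    simp
  rw [hA, hB] at hsum
  have hm1 : ((m : ℚ) + 1) ≠ 0 := by positivity
  push_cast
  rw [show ((m:ℚ) + 1 + 1) = m + 2 by ring]
  field_simp at hsum ⊢
  linarith
end

section
/- For a prime p, an integer e ≥ 1, and 0 ≤ i ≤ p^e - 2, the p-adic valuation of the binomial coefficient C(p^e - 2, i) equals ν_p(i+1). -/
open Nat Finset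

lemma choose_pow_sub_one_val (p : ℕ) (hp : p.Prime) (e : ℕ) (he : 1 ≤ e) (k : ℕ)
    (hk : k ≤ p ^ e - 1) : padicValNat p ((p ^ e - 1).choose k) = 0 := by
  haveI : Fact p.Prime := ⟨hp⟩
  have hp2 := hp.two_le
  have hpe : 2 ≤ p ^ e := by
    calc 2 ≤ p := hp2
    _ = p ^ 1 := (pow_one p).symm
    _ ≤ p ^ e := Nat.pow_le_pow_right (by omega) he
  have hlog : Nat.log p (p ^ e - 1) < e := by
    apply Nat.log_lt_of_lt_pow (by omega)
    omega
  rw [padicValNat_choose hk hlog]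
  convert Finset.card_empty
  rw [Finset.eq_empty_iff_forall_notMem]
  intro j hj
  simp only [Finset.mem_filter, Finset.mem_Ico] at hj
  obtain ⟨⟨hj1, hj2⟩, hle⟩ := hj
  have hmpos : 1 ≤ p ^ j := Nat.one_le_pow _ _ (by omega)
  obtain ⟨t, ht⟩ := pow_dvd_pow p hj2.le
  rcases t with _ | t
  · simp at ht
    omega
  have hexp : p ^ e = p ^ j * t + p ^ j := by rw [ht]; ring
  have hmod : (p ^ e - 1) % p ^ j = p ^ j - 1 := by
    have h3 : p ^ e - 1 = p ^ j * t + (p ^ j - 1) := by omega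
    rw [h3, Nat.mul_add_mod, Nat.mod_eq_of_lt (by omega)]
  have hsum : (k % p ^ j + (p ^ e - 1 - k) % p ^ j) % p ^ j = p ^ j - 1 := by
    rw [Nat.add_mod_mod, Nat.mod_add_mod, Nat.add_sub_cancel' hk, hmod]
  have ha : k % p ^ j < p ^ j := Nat.mod_lt _ (by omega)
  have hb : (p ^ e - 1 - k) % p ^ j < p ^ j := Nat.mod_lt _ (by omega)
  have hmm : (k % p ^ j + (p ^ e - 1 - k) % p ^ j) % p ^ j
      = k % p ^ j + (p ^ e - 1 - k) % p ^ j - p ^ j := by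
    rw [Nat.mod_eq_sub_mod hle, Nat.mod_eq_of_lt (by omega)]
  omega

theorem stmt_1 (p : ℕ) (hp : p.Prime) (e : ℕ) (he : 1 ≤ e) (i : ℕ)
    (hi : i ≤ p ^ e - 2) :
    padicValNat p ((p ^ e - 2).choose i) = padicValNat p (i + 1) := by
  haveI : Fact p.Prime := ⟨hp⟩
  have hp2 := hp.two_le
  have hpe : 2 ≤ p ^ e := by
    calc 2 ≤ p := hp2
    _ = p ^ 1 := (pow_one p).symm
    _ ≤ p ^ e := Nat.pow_le_pow_right (by omega) he
  have key := Nat.add_one_mul_choose_eq (p ^ e - 2) i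
  have h2 : (p ^ e - 2) + 1 = p ^ e - 1 := by omega
  rw [h2] at key
  -- key : (p^e-1) * (p^e-2).choose i = (p^e-1).choose (i+1) * (i+1)
  have hc0 : (p ^ e - 2).choose i ≠ 0 := Nat.choose_pos hi |>.ne'
  have hc1 : (p ^ e - 1).choose (i + 1) ≠ 0 := Nat.choose_pos (by omega) |>.ne'
  have hn0 : p ^ e - 1 ≠ 0 := by omega
  have hval := congrArg (padicValNat p) key
  rw [padicValNat.mul hn0 hc0, padicValNat.mul hc1 (by omega)] at hval
  have hv1 : padicValNat p (p ^ e - 1) = 0 := by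
    apply padicValNat.eq_zero_of_not_dvd
    intro hdvd
    have hpp : p ∣ p ^ e := dvd_pow_self p (by omega)
    have h1 : p ∣ p ^ e - (p ^ e - 1) := Nat.dvd_sub hpp hdvd
    have hone : p ^ e - (p ^ e - 1) = 1 := by omega
    rw [hone] at h1
    have := Nat.le_of_dvd one_pos h1
    omega
  have hv2 : padicValNat p ((p ^ e - 1).choose (i + 1)) = 0 :=
    choose_pow_sub_one_val p hp e he (i + 1) (by omega)
  omega
end

section
/- For an odd prime p, an integer e ≥ 2, and 1 ≤ c ≤ p-1, the binomial coefficient C(p^e - 2, c·p^{e-1} - 1) divided by p^{e-1} is congruent to (-1)^{c+1}·c modulo p. -/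
open Nat

lemma aux1 (p : ℕ) (hp : p.Prime) : ∀ k, k < p → (((p - 1).choose k : ZMod p) = (-1) ^ k) := by
  intro k
  haveI := Fact.mk hp
  induction k with
  | zero => intro _; simp
  | succ k ih =>
    intro hk
    have hk' : k < p := by omega
    have h := Nat.choose_succ_right_eq (p - 1) k
    have hcast := congrArg (fun x : ℕ => (x : ZMod p)) h
    simp only [Nat.cast_mul] at hcast
    have hsub : ((p - 1 - k : ℕ) : ZMod p) = -((k : ZMod p) + 1) := by
      have h1 : p - 1 - k = p - (k + 1) := by omega
      rw [h1, Nat.cast_sub (by omega)]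
      simp [ZMod.natCast_self]
    rw [hsub, ih hk'] at hcast
    have hne : ((k : ZMod p) + 1) ≠ 0 := by
      have : (((k + 1 : ℕ)) : ZMod p) ≠ 0 := by
        rw [Ne, ZMod.natCast_eq_zero_iff]
        intro hdvd
        have := Nat.le_of_dvd (by omega) hdvd
        omega
      push_cast at this
      exact this
    have : ((p - 1).choose (k + 1) : ZMod p) * ((k : ZMod p) + 1)
        = (-1) ^ (k + 1) * ((k : ZMod p) + 1) := by
      push_cast at hcast ⊢
      rw [hcast]; ring
    have := mul_right_cancel₀ hne this
    exact_mod_cast this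

lemma aux2 (p : ℕ) (hp : p.Prime) (c : ℕ) (hc1 : 1 ≤ c) (hcp : c < p) :
    ∀ m, 1 ≤ m → (((p ^ m - 1).choose (c * p ^ (m - 1) - 1) : ZMod p) = (-1) ^ (c - 1)) := by
  haveI := Fact.mk hp
  have hp2 : 2 ≤ p := hp.two_le
  intro m hm
  induction m, hm using Nat.le_induction with
  | base =>
    simp only [pow_one, Nat.sub_self, pow_zero, Nat.mul_one]
    exact aux1 p hp (c - 1) (by omega)
  | succ m hm ih =>
    have hpm1 : 1 ≤ p ^ m := Nat.one_le_pow _ _ (by omega)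
    have hpm1' : 1 ≤ p ^ (m - 1) := Nat.one_le_pow _ _ (by omega)
    have hpmm : p * p ^ (m - 1) = p ^ m := by
      rw [← pow_succ']; congr 1; omega
    have hn : p ^ (m + 1) - 1 = (p - 1) + p * (p ^ m - 1) := by
      have h1 : p * (p ^ m - 1) = p * p ^ m - p := by rw [Nat.mul_sub, Nat.mul_one]
      have h2 : p ^ (m + 1) = p * p ^ m := by rw [pow_succ']
      have h3 : p ≤ p * p ^ m := Nat.le_mul_of_pos_right p (by omega)
      omega
    have hcpm : 1 ≤ c * p ^ (m - 1) := Nat.one_le_iff_ne_zero.mpr (by positivity)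
    have hk : c * p ^ m - 1 = (p - 1) + p * (c * p ^ (m - 1) - 1) := by
      have h1 : p * (c * p ^ (m - 1) - 1) = p * (c * p ^ (m - 1)) - p := by
        rw [Nat.mul_sub, Nat.mul_one]
      have h2 : c * p ^ m = p * (c * p ^ (m - 1)) := by
        rw [← hpmm]; ring
      have h3 : p ≤ p * (c * p ^ (m - 1)) := Nat.le_mul_of_pos_right p (by omega)
      omega
    have key := Choose.choose_modEq_choose_mod_mul_choose_div
      (p := p) (n := p ^ (m + 1) - 1) (k := c * p ^ m - 1)
    rw [hn, hk] at key
    rw [Nat.add_mul_mod_self_left, Nat.add_mul_mod_self_left,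
      Nat.add_mul_div_left _ _ (by omega : 0 < p), Nat.add_mul_div_left _ _ (by omega : 0 < p),
      Nat.mod_eq_of_lt (by omega : p - 1 < p), Nat.div_eq_of_lt (by omega : p - 1 < p),
      Nat.choose_self] at key
    have hcast := (ZMod.intCast_eq_intCast_iff _ _ _).mpr key
    push_cast at hcast
    rw [← hn, ← hk] at hcast
    simp only [Nat.add_sub_cancel]
    rw [hcast]
    simp only [Nat.zero_add, one_mul]
    exact ih

theorem stmt_2 (p : ℕ) (hp : p.Prime) (hodd : Odd p) (e : ℕ) (he : 2 ≤ e)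
    (c : ℕ) (hc1 : 1 ≤ c) (hc2 : c ≤ p - 1) :
    (((p ^ e - 2).choose (c * p ^ (e - 1) - 1) / p ^ (e - 1) : ℕ) : ℤ) ≡
      (-1) ^ (c + 1) * c [ZMOD p] := by
  haveI := Fact.mk hp
  have hp2 : 2 ≤ p := hp.two_le
  have hcp : c < p := by omega
  set q := p ^ (e - 1) with hqdef
  have hq1 : 1 ≤ q := Nat.one_le_pow _ _ (by omega)
  have hN : p * q = p ^ e := by
    rw [hqdef, ← pow_succ']; congr 1; omega
  have h2pq : 2 ≤ p * q := le_trans hp2 (Nat.le_mul_of_pos_right p (by omega))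
  have hcq1 : 1 ≤ c * q := Nat.one_le_iff_ne_zero.mpr (by positivity)
  have hcqp : c * q + q ≤ p * q := by
    calc c * q + q = (c + 1) * q := by ring
      _ ≤ p * q := Nat.mul_le_mul_right q (by omega)
  have hsub : (p - c) * q = p * q - c * q := Nat.sub_mul p c q
  have hpcq1 : 1 ≤ (p - c) * q := by omega
  -- identity I1
  have I1 : (p * q - 1) * ((p * q - 2).choose (c * q - 1))
      = (p * q - 1).choose (c * q) * (c * q) := by
    have h := Nat.add_one_mul_choose_eq (p * q - 2) (c * q - 1)
    rw [show p * q - 2 + 1 = p * q - 1 by omega, show c * q - 1 + 1 = c * q by omega] at h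
    exact h
  have I2 : (p * q) * ((p * q - 1).choose (c * q - 1))
      = (p * q).choose (c * q) * (c * q) := by
    have h := Nat.add_one_mul_choose_eq (p * q - 1) (c * q - 1)
    rw [show p * q - 1 + 1 = p * q by omega, show c * q - 1 + 1 = c * q by omega] at h
    exact h
  have I3 : (p * q) * ((p * q - 1).choose ((p - c) * q - 1))
      = (p * q).choose ((p - c) * q) * ((p - c) * q) := by
    have h := Nat.add_one_mul_choose_eq (p * q - 1) ((p - c) * q - 1)
    rw [show p * q - 1 + 1 = p * q by omega, show (p - c) * q - 1 + 1 = (p - c) * q by omega] at h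
    exact h
  have hs1 : (p * q - 1).choose ((p - c) * q - 1) = (p * q - 1).choose (c * q) := by
    rw [show (p - c) * q - 1 = (p * q - 1) - c * q by omega]
    exact Nat.choose_symm (by omega)
  have hs2 : (p * q).choose ((p - c) * q) = (p * q).choose (c * q) := by
    rw [show (p - c) * q = p * q - c * q from hsub]
    exact Nat.choose_symm (by omega)
  -- I2' : cancel q
  have I2' : p * ((p * q - 1).choose (c * q - 1)) = (p * q).choose (c * q) * c := by
    apply Nat.eq_of_mul_eq_mul_right (show 0 < q by omega)
    calc p * ((p * q - 1).choose (c * q - 1)) * q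
        = (p * q) * ((p * q - 1).choose (c * q - 1)) := by ring
      _ = (p * q).choose (c * q) * (c * q) := I2
      _ = (p * q).choose (c * q) * c * q := by ring
  have I3' : p * ((p * q - 1).choose (c * q)) = (p * q).choose (c * q) * (p - c) := by
    apply Nat.eq_of_mul_eq_mul_right (show 0 < q by omega)
    calc p * ((p * q - 1).choose (c * q)) * q
        = (p * q) * ((p * q - 1).choose ((p - c) * q - 1)) := by rw [hs1]; ring
      _ = (p * q).choose ((p - c) * q) * ((p - c) * q) := I3
      _ = (p * q).choose (c * q) * (p - c) * q := by rw [hs2]; ring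
  -- p divides the central binomial
  have hpd : p ∣ (p * q).choose (c * q) := by
    have hdvd : p ∣ (p * q).choose (c * q) * c := ⟨_, I2'.symm⟩
    have hcop : Nat.Coprime p c := hp.coprime_iff_not_dvd.mpr (fun h => by
      have := Nat.le_of_dvd (by omega) h; omega)
    exact hcop.dvd_of_dvd_mul_right hdvd
  obtain ⟨A, hA⟩ := hpd
  have hcA : (p * q - 1).choose (c * q - 1) = A * c := by
    apply Nat.eq_of_mul_eq_mul_left (show 0 < p by omega)
    rw [I2', hA]; ring
  -- main identity
  have main' : (p * q - 1) * ((p * q - 2).choose (c * q - 1)) = A * ((p - c) * c) * q := by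
    apply Nat.eq_of_mul_eq_mul_left (show 0 < p by omega)
    calc p * ((p * q - 1) * ((p * q - 2).choose (c * q - 1)))
        = p * ((p * q - 1).choose (c * q)) * (c * q) := by rw [I1]; ring
      _ = (p * q).choose (c * q) * (p - c) * (c * q) := by rw [I3']
      _ = p * A * (p - c) * (c * q) := by rw [hA]
      _ = p * (A * ((p - c) * c) * q) := by ring
  -- q divides B
  have hqB : q ∣ (p * q - 2).choose (c * q - 1) := by
    have hd : q ∣ (p * q - 1) * ((p * q - 2).choose (c * q - 1)) :=
      ⟨A * ((p - c) * c), by rw [main']; ring⟩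
    have hcop : Nat.Coprime q (p * q - 1) := by
      apply Nat.Coprime.pow_left
      apply hp.coprime_iff_not_dvd.mpr
      intro hdvd
      have h1 : p ∣ p * q := ⟨q, rfl⟩
      have h2 : p ∣ p * q - (p * q - 1) := Nat.dvd_sub h1 hdvd
      rw [show p * q - (p * q - 1) = 1 by omega] at h2
      have := Nat.le_of_dvd one_pos h2
      omega
    exact hcop.dvd_of_dvd_mul_left hd
  obtain ⟨D, hD⟩ := hqB
  have hBq : (p * q - 2).choose (c * q - 1) / q = D := by
    rw [hD]; exact Nat.mul_div_cancel_left D (by omega)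
  have mainD : (p * q - 1) * D = A * ((p - c) * c) := by
    apply Nat.eq_of_mul_eq_mul_right (show 0 < q by omega)
    calc (p * q - 1) * D * q = (p * q - 1) * (q * D) := by ring
      _ = A * ((p - c) * c) * q := by rw [← hD, main']
  -- move to ZMod p
  rw [← hN, hBq, ← ZMod.intCast_eq_intCast_iff]
  push_cast
  have hcast1 : ((p * q - 1 : ℕ) : ZMod p) = -1 := by
    rw [Nat.cast_sub (by omega)]
    simp [ZMod.natCast_self]
  have hcast2 : ((p - c : ℕ) : ZMod p) = -(c : ZMod p) := by
    rw [Nat.cast_sub (le_of_lt hcp)]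
    simp [ZMod.natCast_self]
  have hmod := congrArg (fun x : ℕ => (x : ZMod p)) mainD
  simp only [Nat.cast_mul] at hmod
  rw [hcast1, hcast2] at hmod
  have hDeq : (D : ZMod p) = (A : ZMod p) * ((c : ZMod p) * (c : ZMod p)) := by
    linear_combination -hmod
  have haux := aux2 p hp c hc1 hcp e (by omega)
  rw [← hqdef, ← hN] at haux
  have hcA' := congrArg (fun x : ℕ => (x : ZMod p)) hcA
  simp only [Nat.cast_mul] at hcA'
  rw [hcA'] at haux
  have hpow : ((-1 : ZMod p)) ^ (c + 1) = (-1 : ZMod p) ^ (c - 1) := by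
    conv_lhs => rw [show c + 1 = (c - 1) + 2 by omega]
    rw [pow_add, neg_one_sq, mul_one]
  rw [hpow, ← haux, hDeq]
  ring
end

section
/- For an odd prime p, ∑_{c=1}^{p-1} (-1)^{c+1}/c ≡ (2^p - 2)/p (mod p), as a congruence of p-integral rational numbers. -/
/-!
Since `C(p, c) / p = C(p - 1, c - 1) / c`, summing over `0 < c < p` gives
`(2^p - 2) / p = ∑ C(p - 1, c - 1) / c`. Pascal's rule together with `p ∣ C(p, k)` for `0 < k < p`
gives `C(p - 1, k) ≡ (-1)^k (mod p)`, so every term of the difference of the two sums has a numerator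
divisible by `p` and a denominator prime to `p`; the non-archimedean property of `padicNorm`
bounds the whole sum by `p⁻¹`.
-/

open Finset

theorem Nat.Prime.cast_choose_pred_eq_neg_one_pow {p k : ℕ} (hp : p.Prime) (hk : k < p) :
    ((p - 1).choose k : ZMod p) = (-1) ^ k := by
  induction k with
  | zero => simp
  | succ k ih =>
    have hpascal := Nat.choose_succ_succ' (p - 1) k
    rw [Nat.sub_add_cancel hp.one_le] at hpascal
    have hvanish : (p.choose (k + 1) : ZMod p) = 0 :=
      (ZMod.natCast_eq_zero_iff _ _).mpr (hp.dvd_choose_self k.succ_ne_zero hk)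
    rw [hpascal, Nat.cast_add, ih (by omega)] at hvanish
    linear_combination hvanish

theorem Nat.Prime.intCast_dvd_neg_one_pow_sub_choose {p c : ℕ} (hp : p.Prime) (hc : 0 < c)
    (hcp : c < p) : (p : ℤ) ∣ (-1) ^ (c + 1) - (p - 1).choose (c - 1) := by
  rw [← ZMod.intCast_zmod_eq_zero_iff_dvd]
  push_cast
  rw [hp.cast_choose_pred_eq_neg_one_pow (by omega), show c + 1 = c - 1 + 2 by omega, pow_add]
  ring

theorem sum_Icc_choose_eq_two_pow_sub_two {n : ℕ} (hn : 0 < n) :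
    ∑ c ∈ Icc 1 (n - 1), (n.choose c : ℚ) = 2 ^ n - 2 := by
  obtain ⟨m, rfl⟩ := Nat.exists_eq_add_one_of_ne_zero hn.ne'
  have h := Nat.sum_range_choose (m + 1)
  rw [sum_range_succ, sum_range_succ', Nat.choose_zero_right, Nat.choose_self] at h
  rw [Nat.add_sub_cancel, ← Ico_add_one_right_eq_Icc, sum_Ico_eq_sum_range, Nat.add_sub_cancel]
  simp only [add_comm 1]
  linear_combination (norm := push_cast) (congrArg (Nat.cast : ℕ → ℚ) h)
  ring

theorem cast_choose_div_eq {n c : ℕ} (hn : 0 < n) (hc : 0 < c) :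
    (n.choose c : ℚ) / n = (n - 1).choose (c - 1) / c := by
  have h := Nat.add_one_mul_choose_eq (n - 1) (c - 1)
  rw [Nat.sub_add_cancel hn, Nat.sub_add_cancel hc] at h
  rw [div_eq_div_iff (by positivity) (by positivity)]
  exact_mod_cast h.symm.trans (mul_comm _ _)

theorem two_pow_sub_two_div_eq_sum_Icc {n : ℕ} (hn : 0 < n) :
    (2 ^ n - 2 : ℚ) / n = ∑ c ∈ Icc 1 (n - 1), ((n - 1).choose (c - 1) : ℚ) / c := by
  rw [← sum_Icc_choose_eq_two_pow_sub_two hn, sum_div]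
  exact sum_congr rfl fun c hc => cast_choose_div_eq hn (mem_Icc.mp hc).1

theorem padicNorm_intCast_div_natCast_le {p : ℕ} [Fact p.Prime] {z : ℤ} {c : ℕ}
    (hz : (p : ℤ) ∣ z) (hc : ¬p ∣ c) : padicNorm p (z / c) ≤ (p : ℚ)⁻¹ := by
  rw [padicNorm.div, (padicNorm.nat_eq_one_iff c).mpr hc, div_one, ← zpow_neg_one]
  exact padicNorm.dvd_iff_norm_le.mp (by simpa using hz)

theorem eq_zero_or_one_le_padicValRat_of_padicNorm_le {p : ℕ} [hp : Fact p.Prime] {q : ℚ}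
    (h : padicNorm p q ≤ (p : ℚ)⁻¹) : q = 0 ∨ 1 ≤ padicValRat p q := by
  refine or_iff_not_imp_left.mpr fun hq => ?_
  rw [padicNorm.eq_zpow_of_nonzero hq, ← zpow_neg_one,
    zpow_le_zpow_iff_right₀ (by exact_mod_cast hp.out.one_lt)] at h
  omega

theorem stmt_3_general (p : ℕ) (hp : p.Prime) :
    (∑ c ∈ Finset.Icc 1 (p - 1), (-1 : ℚ) ^ (c + 1) / c) - ((2 ^ p - 2 : ℚ) / p) = 0 ∨
    1 ≤ padicValRat p ((∑ c ∈ Finset.Icc 1 (p - 1), (-1 : ℚ) ^ (c + 1) / c) -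
      ((2 ^ p - 2 : ℚ) / p)) := by
  have := Fact.mk hp
  apply eq_zero_or_one_le_padicValRat_of_padicNorm_le
  rw [two_pow_sub_two_div_eq_sum_Icc hp.pos, ← sum_sub_distrib]
  refine padicNorm.sum_le' (fun c hc => ?_) (by positivity)
  obtain ⟨hc, hcp⟩ : 0 < c ∧ c < p := by simp only [mem_Icc] at hc; omega
  have hterm := padicNorm_intCast_div_natCast_le
    (hp.intCast_dvd_neg_one_pow_sub_choose hc hcp) (Nat.not_dvd_of_pos_of_lt hc hcp)
  rw [← sub_div]
  exact_mod_cast hterm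

theorem stmt_3 (p : ℕ) (hp : p.Prime) (hodd : Odd p) :
    (∑ c ∈ Finset.Icc 1 (p - 1), (-1 : ℚ) ^ (c + 1) / c) - ((2 ^ p - 2 : ℚ) / p) = 0 ∨
    1 ≤ padicValRat p ((∑ c ∈ Finset.Icc 1 (p - 1), (-1 : ℚ) ^ (c + 1) / c) -
      ((2 ^ p - 2 : ℚ) / p)) :=
  stmt_3_general p hp
end

section
/- For every integer n ≥ 1, the 2-adic valuation of ∑_{j=1}^{n} 1/(2j-1) equals 2·ν_2(n). -/
/-!
Write `n = 2^a m` with `m` odd and pair the `k`-th odd number `x = 2k+1` with its mirror image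
`y = 2(n-1-k)+1`. Since `x + y = 2n`, `1/x + 1/y = 2n/(xy)`, so the sum is `n · ∑ 1/(x y)`, and
it remains to see that `∑ 1/(x y)` has valuation exactly `a`. Modulo `2^(a+1)` we have `y ≡ -x`,
so this sum is `-∑ x⁻²`; the odd numbers below `2n` run `m` times through the units of
`ZMod (2^(a+1))`, inversion permutes these units, and
`∑_{k < 2^a} (2k+1)² = 2^a (4^(a+1) - 1)/3 ≡ 2^a`.
-/

open Finset

theorem Function.Periodic.sum_range_mul {M : Type*} [AddCommMonoid M] {g : ℕ → M} {P : ℕ}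
    (hg : Function.Periodic g P) (m : ℕ) :
    ∑ k ∈ range (m * P), g k = m • ∑ k ∈ range P, g k := by
  induction m with
  | zero => simp
  | succ m ih =>
    rw [add_mul, one_mul, sum_range_add, ih, succ_nsmul]
    congr 1
    refine sum_congr rfl fun k _ => ?_
    rw [add_comm, ← smul_eq_mul]
    exact hg.nsmul m k

theorem Finset.sum_prod_erase_eq_prod_mul_sum {ι R : Type*} [CommSemiring R] [DecidableEq ι]
    {s : Finset ι} {z w : ι → R} (h : ∀ i ∈ s, w i * z i = 1) :
    ∑ i ∈ s, ∏ j ∈ s.erase i, z j = (∏ i ∈ s, z i) * ∑ i ∈ s, w i := by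
  rw [mul_sum]
  refine sum_congr rfl fun i hi => ?_
  rw [← prod_erase_mul s z hi, mul_assoc, mul_comm (z i), h i hi, mul_one]

theorem ne_zero_of_natCast_eq_pow {p N a : ℕ} (hp : 1 < p)
    (h : (N : ZMod (p ^ (a + 1))) = (p ^ a : ℕ)) : N ≠ 0 := by
  rintro rfl
  rw [Nat.cast_zero, eq_comm, ZMod.natCast_eq_zero_iff, Nat.pow_dvd_pow_iff_le_right hp] at h
  omega

theorem padicValNat_eq_of_natCast_eq_pow {p : ℕ} [hp : Fact p.Prime] {N a : ℕ}
    (h : (N : ZMod (p ^ (a + 1))) = (p ^ a : ℕ)) : padicValNat p N = a := by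
  have hmod : N ≡ p ^ a [MOD p ^ (a + 1)] := (ZMod.natCast_eq_natCast_iff _ _ _).mp h
  have hdvd : p ^ a ∣ N := (hmod.dvd_iff (pow_dvd_pow p a.le_succ)).mpr dvd_rfl
  have hnot : ¬ p ^ (a + 1) ∣ N := fun hdvd => by
    rw [hmod.dvd_iff dvd_rfl, Nat.pow_dvd_pow_iff_le_right hp.out.one_lt] at hdvd
    omega
  rw [padicValNat_dvd_iff_le (ne_zero_of_natCast_eq_pow hp.out.one_lt h)] at hdvd hnot
  omega

theorem Odd.natCast_mul_two_pow {d : ℕ} (hd : Odd d) (a : ℕ) :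
    (d : ZMod (2 ^ (a + 1))) * 2 ^ a = 2 ^ a := by
  obtain ⟨r, rfl⟩ := hd
  have h : ((2 ^ (a + 1) : ℕ) : ZMod (2 ^ (a + 1))) = 0 := ZMod.natCast_self _
  push_cast at h ⊢
  linear_combination r * h

theorem three_mul_sum_range_odd_sq (P : ℕ) :
    3 * ∑ k ∈ range P, ((2 * k + 1 : ℕ) : ℤ) ^ 2 = P * (4 * P ^ 2 - 1) := by
  induction P with
  | zero => simp
  | succ P ih =>
    rw [sum_range_succ, mul_add, ih]
    push_cast
    ring

theorem sum_range_two_pow_odd_sq (a : ℕ) :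
    ∑ k ∈ range (2 ^ a), ((2 * k + 1 : ℕ) : ZMod (2 ^ (a + 1))) ^ 2 = 2 ^ a := by
  have hdvd : (2 ^ (a + 1) : ℤ) ∣ ∑ k ∈ range (2 ^ a), ((2 * k + 1 : ℕ) : ℤ) ^ 2 - 2 ^ a := by
    have hcop : IsCoprime ((2 : ℤ) ^ (a + 1)) 3 :=
      (show IsCoprime (2 : ℤ) 3 from ⟨-1, 1, by norm_num⟩).pow_left
    refine hcop.dvd_of_dvd_mul_left ⟨2 * (2 ^ (2 * a) - 1), ?_⟩
    rw [mul_sub, three_mul_sum_range_odd_sq]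
    push_cast
    ring
  have := (ZMod.intCast_zmod_eq_zero_iff_dvd _ (2 ^ (a + 1))).mpr (by exact_mod_cast hdvd)
  push_cast at this ⊢
  exact sub_eq_zero.mp this

def oddUnit (a k : ℕ) : (ZMod (2 ^ (a + 1)))ˣ :=
  ZMod.unitOfCoprime (2 * k + 1)
    ((Nat.coprime_two_right.mpr (odd_two_mul_add_one k)).pow_right (a + 1))

theorem coe_oddUnit (a k : ℕ) : (oddUnit a k : ZMod (2 ^ (a + 1))) = (2 * k + 1 : ℕ) :=
  ZMod.coe_unitOfCoprime (n := 2 ^ (a + 1)) _ _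

theorem oddUnit_periodic (a : ℕ) : Function.Periodic (oddUnit a) (2 ^ a) := fun k => by
  ext
  rw [coe_oddUnit, coe_oddUnit, show 2 * (k + 2 ^ a) + 1 = 2 * k + 1 + 2 ^ (a + 1) by ring,
    Nat.cast_add, ZMod.natCast_self, add_zero]

theorem oddUnit_injOn (a : ℕ) : Set.InjOn (oddUnit a) (range (2 ^ a)) := by
  intro k hk l hl h
  have hlt : ∀ j ∈ (range (2 ^ a) : Set ℕ), 2 * j + 1 < 2 ^ (a + 1) := fun j hj => by
    rw [coe_range, Set.mem_Iio] at hj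
    rw [pow_succ]
    omega
  have := congrArg (fun u : (ZMod (2 ^ (a + 1)))ˣ => (u : ZMod (2 ^ (a + 1))).val) h
  simp only [coe_oddUnit, ZMod.val_natCast_of_lt (hlt k hk), ZMod.val_natCast_of_lt (hlt l hl)]
    at this
  omega

theorem sum_range_two_pow_oddUnit {M : Type*} [AddCommMonoid M] (a : ℕ)
    (F : (ZMod (2 ^ (a + 1)))ˣ → M) :
    ∑ k ∈ range (2 ^ a), F (oddUnit a k) = ∑ u, F u := by
  rw [← sum_image fun k hk l hl => oddUnit_injOn a hk hl]
  congr
  refine eq_univ_of_card _ ?_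
  rw [card_image_of_injOn (oddUnit_injOn a), card_range, ZMod.card_units_eq_totient,
    Nat.totient_prime_pow_succ Nat.prime_two]
  simp

theorem sum_units_sq (a : ℕ) :
    ∑ u : (ZMod (2 ^ (a + 1)))ˣ, (u : ZMod (2 ^ (a + 1))) ^ 2 = 2 ^ a := by
  rw [← sum_range_two_pow_oddUnit a fun u => (u : ZMod (2 ^ (a + 1))) ^ 2]
  simp only [coe_oddUnit]
  exact sum_range_two_pow_odd_sq a

theorem sum_range_oddUnit_inv_sq (a : ℕ) {m : ℕ} (hm : Odd m) :
    ∑ k ∈ range (2 ^ a * m), (((oddUnit a k)⁻¹ : (ZMod (2 ^ (a + 1)))ˣ) : ZMod (2 ^ (a + 1))) ^ 2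
      = 2 ^ a := by
  have hper : Function.Periodic
      (fun k => (((oddUnit a k)⁻¹ : (ZMod (2 ^ (a + 1)))ˣ) : ZMod (2 ^ (a + 1))) ^ 2) (2 ^ a) :=
    fun k => by simp only [oddUnit_periodic a k]
  have hinv : ∑ u : (ZMod (2 ^ (a + 1)))ˣ, ((u⁻¹ : (ZMod (2 ^ (a + 1)))ˣ) : ZMod (2 ^ (a + 1))) ^ 2
      = ∑ u : (ZMod (2 ^ (a + 1)))ˣ, (u : ZMod (2 ^ (a + 1))) ^ 2 :=
    Equiv.sum_comp (Equiv.inv (ZMod (2 ^ (a + 1)))ˣ) fun u => (u : ZMod (2 ^ (a + 1))) ^ 2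
  rw [mul_comm, hper.sum_range_mul,
    sum_range_two_pow_oddUnit a fun u => ((u⁻¹ : (ZMod (2 ^ (a + 1)))ˣ) : ZMod (2 ^ (a + 1))) ^ 2,
    hinv, sum_units_sq, nsmul_eq_mul, hm.natCast_mul_two_pow]

def mirrorOddProd (n k : ℕ) : ℕ := (2 * k + 1) * (2 * (n - 1 - k) + 1)

theorem odd_mirrorOddProd (n k : ℕ) : Odd (mirrorOddProd n k) :=
  (odd_two_mul_add_one k).mul (odd_two_mul_add_one _)

theorem odd_prod_mirrorOddProd (n : ℕ) (s : Finset ℕ) : Odd (∏ k ∈ s, mirrorOddProd n k) :=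
  prod_induction _ Odd (fun _ _ => Odd.mul) odd_one fun k _ => odd_mirrorOddProd n k

theorem natCast_mirrorOddProd {a n k : ℕ} (hn : 2 ^ a ∣ n) (hk : k < n) :
    (mirrorOddProd n k : ZMod (2 ^ (a + 1))) = -(oddUnit a k : ZMod (2 ^ (a + 1))) ^ 2 := by
  have hmirror : ((2 * (n - 1 - k) + 1 : ℕ) : ZMod (2 ^ (a + 1))) = -(2 * k + 1 : ℕ) := by
    refine eq_neg_of_add_eq_zero_left ?_
    rw [← Nat.cast_add, show 2 * (n - 1 - k) + 1 + (2 * k + 1) = 2 * n by omega,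
      ZMod.natCast_eq_zero_iff, pow_succ']
    exact Nat.mul_dvd_mul_left 2 hn
  rw [mirrorOddProd, Nat.cast_mul, hmirror, coe_oddUnit]
  ring

theorem natCast_sum_prod_erase_mirrorOddProd (a : ℕ) {m : ℕ} (hm : Odd m) :
    ((∑ k ∈ range (2 ^ a * m), ∏ j ∈ (range (2 ^ a * m)).erase k, mirrorOddProd (2 ^ a * m) j : ℕ)
      : ZMod (2 ^ (a + 1))) = (2 ^ a : ℕ) := by
  have hinv : ∀ k ∈ range (2 ^ a * m),
      -(((oddUnit a k)⁻¹ : (ZMod (2 ^ (a + 1)))ˣ) : ZMod (2 ^ (a + 1))) ^ 2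
        * (mirrorOddProd (2 ^ a * m) k : ZMod (2 ^ (a + 1))) = 1 := fun k hk => by
    rw [natCast_mirrorOddProd (dvd_mul_right _ _) (mem_range.mp hk)]
    have h := Units.inv_mul (oddUnit a k)
    linear_combination
      (((oddUnit a k)⁻¹ : (ZMod (2 ^ (a + 1)))ˣ) * (oddUnit a k : ZMod (2 ^ (a + 1))) + 1) * h
  have htop : ((2 ^ (a + 1) : ℕ) : ZMod (2 ^ (a + 1))) = 0 := ZMod.natCast_self _
  rw [Nat.cast_sum, sum_congr rfl fun k _ => Nat.cast_prod _ _,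
    sum_prod_erase_eq_prod_mul_sum hinv, sum_neg_distrib, sum_range_oddUnit_inv_sq a hm,
    ← Nat.cast_prod, mul_neg, (odd_prod_mirrorOddProd _ _).natCast_mul_two_pow]
  push_cast at htop ⊢
  linear_combination -htop

theorem sum_Icc_one_div_two_mul_sub_one (n : ℕ) :
    ∑ j ∈ Icc 1 n, (1 : ℚ) / (2 * j - 1) = ∑ k ∈ range n, (1 : ℚ) / (2 * k + 1 : ℕ) := by
  induction n with
  | zero => simp
  | succ n ih =>
    rw [sum_Icc_succ_top (by omega), ih, sum_range_succ]
    push_cast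
    ring

theorem sum_range_one_div_odd_eq_mul (n : ℕ) :
    ∑ k ∈ range n, (1 : ℚ) / (2 * k + 1 : ℕ) =
      n * ∑ k ∈ range n, (1 : ℚ) / mirrorOddProd n k := by
  have hpair : ∀ k ∈ range n, (1 : ℚ) / (2 * k + 1 : ℕ) + 1 / (2 * (n - 1 - k) + 1 : ℕ)
      = 2 * n * (1 / mirrorOddProd n k) := fun k hk => by
    have hk : ((n - 1 - k : ℕ) : ℚ) = n - 1 - k := by
      rw [mem_range] at hk
      rw [Nat.cast_sub (by omega), Nat.cast_sub (by omega), Nat.cast_one]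
    rw [mirrorOddProd, Nat.cast_mul]
    field_simp
    push_cast [hk]
    ring
  have := sum_congr rfl hpair
  rw [sum_add_distrib, sum_range_reflect (fun k => (1 : ℚ) / (2 * k + 1 : ℕ)) n, ← mul_sum] at this
  linarith

theorem sum_one_div_eq_div {ι : Type*} [DecidableEq ι] {s : Finset ι} {z : ι → ℕ}
    (hz : ∀ i ∈ s, z i ≠ 0) :
    ∑ i ∈ s, (1 : ℚ) / z i = ((∑ i ∈ s, ∏ j ∈ s.erase i, z j : ℕ) : ℚ) / (∏ i ∈ s, z i : ℕ) := by
  have hD : ((∏ i ∈ s, z i : ℕ) : ℚ) ≠ 0 := by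
    push_cast
    exact prod_ne_zero_iff.mpr fun i hi => Nat.cast_ne_zero.mpr (hz i hi)
  rw [eq_div_iff hD, mul_comm]
  push_cast
  exact (sum_prod_erase_eq_prod_mul_sum fun i hi =>
    one_div_mul_cancel (Nat.cast_ne_zero.mpr (hz i hi))).symm

theorem stmt_4 (n : ℕ) (hn : 1 ≤ n) :
    padicValRat 2 (∑ j ∈ Finset.Icc 1 n, (1 : ℚ) / (2 * j - 1)) =
      2 * padicValNat 2 n := by
  obtain ⟨a, m, hm, rfl⟩ := Nat.exists_eq_two_pow_mul_odd (by omega : n ≠ 0)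
  have hn' : ((2 ^ a * m : ℕ) : ZMod (2 ^ (a + 1))) = (2 ^ a : ℕ) := by
    rw [Nat.cast_mul, mul_comm, Nat.cast_pow, Nat.cast_ofNat, hm.natCast_mul_two_pow]
  have hnum := natCast_sum_prod_erase_mirrorOddProd a hm
  have hden := odd_prod_mirrorOddProd (2 ^ a * m) (range (2 ^ a * m))
  have hn0 := Nat.cast_ne_zero (R := ℚ) |>.mpr (ne_zero_of_natCast_eq_pow one_lt_two hn')
  have hnum0 := Nat.cast_ne_zero (R := ℚ) |>.mpr (ne_zero_of_natCast_eq_pow one_lt_two hnum)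
  have hden0 := Nat.cast_ne_zero (R := ℚ) |>.mpr hden.pos.ne'
  rw [sum_Icc_one_div_two_mul_sub_one, sum_range_one_div_odd_eq_mul,
    sum_one_div_eq_div fun k _ => (odd_mirrorOddProd _ k).pos.ne',
    padicValRat.mul hn0 (div_ne_zero hnum0 hden0), padicValRat.div hnum0 hden0,
    padicValRat.of_nat, padicValRat.of_nat, padicValRat.of_nat,
    padicValNat_eq_of_natCast_eq_pow hn', padicValNat_eq_of_natCast_eq_pow hnum,
    padicValNat.eq_zero_of_not_dvd hden.not_two_dvd_nat]
  ring
end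

section
/- For every integer e ≥ 2, the 2-adic valuation of the elementary symmetric polynomial of degree 2^e - 2 in the 2^e arguments -(2^e-1), -(2^e-3), ..., -1, 1, ..., 2^e-3, 2^e-1 equals e-1. -/
open Polynomial Finset

lemma esymm_eq (N : ℕ) (hN : 0 < N) :
    Multiset.esymm
        (((Finset.range N).val.map (fun j : ℕ => (2 * (j : ℤ) + 1))) +
          ((Finset.range N).val.map (fun j : ℕ => -(2 * (j : ℤ) + 1))))
        (2 * N - 2) =
      (-1) ^ (N - 1) * ∑ j ∈ range N, ∏ i ∈ (range N).erase j, (2 * (i : ℤ) + 1) ^ 2 := by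
  set s : Multiset ℤ :=
    ((Finset.range N).val.map (fun j : ℕ => (2 * (j : ℤ) + 1))) +
      ((Finset.range N).val.map (fun j : ℕ => -(2 * (j : ℤ) + 1))) with hs
  have hcard : Multiset.card s = 2 * N := by simp [hs, two_mul]
  have h2 : (2 : ℕ) ≤ Multiset.card s := by omega
  have hv := Multiset.prod_X_sub_C_coeff s h2
  rw [hcard] at hv
  have hesymm : s.esymm (2 * N - 2) = (s.map fun t => X - C t).prod.coeff 2 := by
    rw [hv, show 2 * N - 2 = 2 * (N - 1) by omega, pow_mul]
    norm_num
  rw [hesymm]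
  -- rewrite the product
  have hprod : (s.map fun t => X - C t).prod =
      expand ℤ 2 (∏ j ∈ range N, (X - C ((2 * (j : ℤ) + 1) ^ 2))) := by
    rw [hs, Multiset.map_add, Multiset.prod_add, Multiset.map_map, Multiset.map_map,
      map_prod]
    rw [← Finset.prod_eq_multiset_prod, ← Finset.prod_eq_multiset_prod, ← Finset.prod_mul_distrib]
    refine Finset.prod_congr rfl fun j _ => ?_
    simp only [Function.comp_apply, map_sub, map_add, map_mul, map_ofNat, expand_X, expand_C]
    ring_nf
    simp [C_pow, C_mul, C_add]
    ring
  rw [hprod, show (2:ℕ) = 2 * 1 from rfl, coeff_expand_mul' (by norm_num)]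
  -- coeff 1 via derivative
  set Q : ℤ[X] := ∏ j ∈ range N, (X - C ((2 * (j : ℤ) + 1) ^ 2)) with hQ
  have hc1 : Q.coeff 1 = (derivative Q).coeff 0 := by
    rw [coeff_derivative]; push_cast; ring
  rw [hc1, coeff_zero_eq_eval_zero]
  have hder : derivative Q =
      ∑ j ∈ range N, (∏ i ∈ (range N).erase j, (X - C ((2 * (i : ℤ) + 1) ^ 2))) := by
    rw [hQ, Finset.prod_eq_multiset_prod, derivative_prod]
    rw [Finset.sum_eq_multiset_sum]
    refine congrArg _ (Multiset.map_congr rfl fun j hj => ?_)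
    rw [derivative_sub, derivative_X, derivative_C, sub_zero, mul_one, ← Finset.erase_val,
      ← Finset.prod_eq_multiset_prod]
  rw [hder, eval_finset_sum, Finset.mul_sum]
  refine Finset.sum_congr rfl fun j hj => ?_
  rw [eval_prod]
  have : ∀ i ∈ (range N).erase j, eval 0 (X - C ((2 * (i : ℤ) + 1) ^ 2)) =
      (-1) * (2 * (i : ℤ) + 1) ^ 2 := by intro i _; simp
  rw [Finset.prod_congr rfl this, Finset.prod_mul_distrib, Finset.prod_const]
  have hc : ((range N).erase j).card = N - 1 := by
    rw [Finset.card_erase_of_mem hj, Finset.card_range]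
  rw [hc]


lemma three_mul_sum_sq (N : ℕ) :
    3 * ∑ j ∈ range N, (2 * (j : ℤ) + 1) ^ 2 = N * (4 * (N:ℤ) ^ 2 - 1) := by
  induction N with
  | zero => simp
  | succ n ih => rw [Finset.sum_range_succ, mul_add, ih]; push_cast; ring

lemma S_form (e : ℕ) (he : 2 ≤ e) :
    ∃ q : ℤ, (∑ j ∈ range (2 ^ (e-1)), ∏ i ∈ (range (2 ^ (e-1))).erase j, (2 * (i : ℤ) + 1) ^ 2)
      = 2 ^ e * q + 2 ^ (e-1) := by
  haveI : NeZero (2 ^ e) := NeZero.of_pos (pow_pos two_pos e)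
  set N := 2 ^ (e-1) with hNdef
  -- units
  have hU : ∀ x : Fin N, IsUnit (((2 * (x:ℕ) + 1 : ℕ)) : ZMod (2^e)) := by
    intro x
    rw [ZMod.isUnit_iff_coprime]
    exact Nat.Coprime.pow_right e (Odd.coprime_two_right ⟨x, by ring⟩)
  set F : Fin N → (ZMod (2^e))ˣ := fun x => (hU x).unit with hF
  have hcoe : ∀ x : Fin N, ((F x : (ZMod (2^e))ˣ) : ZMod (2^e)) = ((2 * (x:ℕ) + 1 : ℕ) : ZMod (2^e)) :=
    fun x => IsUnit.unit_spec (hU x)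
  have hlt : ∀ x : Fin N, 2 * (x:ℕ) + 1 < 2 ^ e := by
    intro x
    have h1 := x.isLt
    have h2 : 2 * N = 2 ^ e := by rw [hNdef, ← pow_succ']; congr 1; omega
    omega
  have hinj : Function.Injective F := by
    intro x y hxy
    have h1 : ((2 * (x:ℕ) + 1 : ℕ) : ZMod (2^e)) = ((2 * (y:ℕ) + 1 : ℕ) : ZMod (2^e)) := by
      rw [← hcoe, ← hcoe, hxy]
    have h2 := congrArg ZMod.val h1
    rw [ZMod.val_cast_of_lt (hlt x), ZMod.val_cast_of_lt (hlt y)] at h2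
    exact Fin.ext (by omega)
  have hcard : Fintype.card (Fin N) = Fintype.card (ZMod (2^e))ˣ := by
    rw [Fintype.card_fin, ZMod.card_units_eq_totient,
      Nat.totient_prime_pow Nat.prime_two (by omega : 0 < e)]
    omega
  have hbij : Function.Bijective F :=
    (Fintype.bijective_iff_injective_and_card F).mpr ⟨hinj, hcard⟩
  -- main computation
  set S : ℤ := ∑ j ∈ range N, ∏ i ∈ (range N).erase j, (2 * (i : ℤ) + 1) ^ 2 with hSdef
  set A : ℤ := ∏ i ∈ range N, (2 * (i : ℤ) + 1) ^ 2 with hAdef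
  set T : ℤ := ∑ j ∈ range N, (2 * (j : ℤ) + 1) ^ 2 with hTdef
  set P : ZMod (2^e) := ∏ i ∈ range N, (2 * ((i:ℕ) : ZMod (2^e)) + 1) ^ 2 with hPdef
  have hb : ∀ x : Fin N, ((F x : (ZMod (2^e))ˣ) : ZMod (2^e)) ^ 2 = (2 * ((x:ℕ) : ZMod (2^e)) + 1) ^ 2 := by
    intro x; rw [hcoe]; push_cast; ring
  have key : ∀ x : Fin N,
      (∏ i ∈ (range N).erase (x:ℕ), (2 * ((i:ℕ) : ZMod (2^e)) + 1) ^ 2) = P * ↑((F x)⁻¹ ^ 2) := by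
    intro x
    have hmem : (x:ℕ) ∈ range N := mem_range.mpr x.isLt
    have h1 : (∏ i ∈ (range N).erase (x:ℕ), (2 * ((i:ℕ) : ZMod (2^e)) + 1) ^ 2)
        * ((F x ^ 2 : (ZMod (2^e))ˣ) : ZMod (2^e)) = P := by
      rw [Units.val_pow_eq_pow_val, hb]
      exact Finset.prod_erase_mul _ _ hmem
    have hu : (F x ^ 2) * ((F x)⁻¹ ^ 2) = 1 := by group
    calc (∏ i ∈ (range N).erase (x:ℕ), (2 * ((i:ℕ) : ZMod (2^e)) + 1) ^ 2)
        = (∏ i ∈ (range N).erase (x:ℕ), (2 * ((i:ℕ) : ZMod (2^e)) + 1) ^ 2)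
            * (((F x ^ 2) * ((F x)⁻¹ ^ 2) : (ZMod (2^e))ˣ) : ZMod (2^e)) := by rw [hu]; simp
      _ = ((∏ i ∈ (range N).erase (x:ℕ), (2 * ((i:ℕ) : ZMod (2^e)) + 1) ^ 2)
            * ((F x ^ 2 : (ZMod (2^e))ˣ) : ZMod (2^e))) * ↑((F x)⁻¹ ^ 2) := by
            rw [Units.val_mul]; ring
      _ = P * ↑((F x)⁻¹ ^ 2) := by rw [h1]
  have e5 : ∑ x : Fin N, ((F x ^ 2 : (ZMod (2^e))ˣ) : ZMod (2^e)) = ((T : ℤ) : ZMod (2^e)) := by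
    have hstep : ∀ x : Fin N, ((F x ^ 2 : (ZMod (2^e))ˣ) : ZMod (2^e))
        = (2 * ((x:ℕ) : ZMod (2^e)) + 1) ^ 2 := fun x => by
      rw [Units.val_pow_eq_pow_val, hb]
    rw [Finset.sum_congr rfl fun x _ => hstep x, hTdef]
    push_cast
    rw [← Fin.sum_univ_eq_sum_range (fun j => (2 * ((j:ℕ) : ZMod (2^e)) + 1) ^ 2) N]
  have hcastS : ((S : ℤ) : ZMod (2^e)) = P * ((T : ℤ) : ZMod (2^e)) := by
    have e1 : ((S : ℤ) : ZMod (2^e)) =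
        ∑ x : Fin N, ∏ i ∈ (range N).erase (x:ℕ), (2 * ((i:ℕ) : ZMod (2^e)) + 1) ^ 2 := by
      rw [hSdef]
      push_cast
      rw [← Fin.sum_univ_eq_sum_range
        (fun j => ∏ i ∈ (range N).erase j, (2 * ((i:ℕ) : ZMod (2^e)) + 1) ^ 2) N]
    have e2 : ∑ x : Fin N, ((((F x)⁻¹ ^ 2 : (ZMod (2^e))ˣ)) : ZMod (2^e))
        = ∑ u : (ZMod (2^e))ˣ, ((u⁻¹ ^ 2 : (ZMod (2^e))ˣ) : ZMod (2^e)) :=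
      hbij.sum_comp (fun u => ((u⁻¹ ^ 2 : (ZMod (2^e))ˣ) : ZMod (2^e)))
    have e3 : ∑ u : (ZMod (2^e))ˣ, ((u⁻¹ ^ 2 : (ZMod (2^e))ˣ) : ZMod (2^e))
        = ∑ u : (ZMod (2^e))ˣ, ((u ^ 2 : (ZMod (2^e))ˣ) : ZMod (2^e)) :=
      Equiv.sum_comp (Equiv.inv (ZMod (2^e))ˣ) (fun u => ((u ^ 2 : (ZMod (2^e))ˣ) : ZMod (2^e)))
    have e4 : ∑ u : (ZMod (2^e))ˣ, ((u ^ 2 : (ZMod (2^e))ˣ) : ZMod (2^e))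
        = ∑ x : Fin N, ((F x ^ 2 : (ZMod (2^e))ˣ) : ZMod (2^e)) :=
      (hbij.sum_comp (fun u => ((u ^ 2 : (ZMod (2^e))ˣ) : ZMod (2^e)))).symm
    rw [e1]
    calc ∑ x : Fin N, ∏ i ∈ (range N).erase (x:ℕ), (2 * ((i:ℕ) : ZMod (2^e)) + 1) ^ 2
        = ∑ x : Fin N, P * ↑((F x)⁻¹ ^ 2) := Finset.sum_congr rfl fun x _ => key x
      _ = P * ∑ x : Fin N, ((((F x)⁻¹ ^ 2 : (ZMod (2^e))ˣ)) : ZMod (2^e)) := by rw [Finset.mul_sum]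
      _ = P * ((T : ℤ) : ZMod (2^e)) := by rw [e2, e3, e4, e5]
  have hPA : P = ((A : ℤ) : ZMod (2^e)) := by rw [hPdef, hAdef]; push_cast; rfl
  -- T = N * m with m odd
  have h3T := three_mul_sum_sq N
  rw [← hTdef] at h3T
  have h3dvd : (3 : ℤ) ∣ 4 * (N:ℤ) ^ 2 - 1 := by
    have h0 : ((4 * (N:ℤ) ^ 2 - 1 : ℤ) : ZMod 3) = 0 := by
      push_cast
      rw [hNdef]
      push_cast
      rw [show (4 : ZMod 3) = 2 ^ 2 by decide, ← pow_mul, ← pow_add,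
        show 2 + (e-1) * 2 = 2 * e by omega, pow_mul,
        show (2 : ZMod 3) ^ 2 = 1 by decide, one_pow, sub_self]
    exact (ZMod.intCast_zmod_eq_zero_iff_dvd _ 3).mp h0
  obtain ⟨m, hm⟩ := h3dvd
  have hT : T = (N:ℤ) * m := by
    apply mul_left_cancel₀ (by norm_num : (3:ℤ) ≠ 0)
    rw [h3T, hm]; ring
  have hmodd : Odd m := by
    have h1 : Odd (4 * (N:ℤ) ^ 2 - 1) := ⟨2 * (N:ℤ)^2 - 1, by ring⟩
    rw [hm, Int.odd_mul] at h1
    exact h1.2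
  have hAodd : Odd A := by
    rw [hAdef]
    refine Finset.prod_induction _ Odd (fun a b => Odd.mul) odd_one fun i _ => ?_
    exact Odd.pow ⟨(i:ℤ), by ring⟩
  -- conclude
  have hmod : S ≡ A * ((N:ℤ) * m) [ZMOD (2 ^ e : ℕ)] := by
    rw [← ZMod.intCast_eq_intCast_iff]
    rw [hcastS, hPA, hT]
    push_cast
    ring
  obtain ⟨d, hd⟩ := Int.ModEq.dvd hmod
  obtain ⟨t, ht⟩ := Odd.mul hAodd hmodd
  have hNZ : (N:ℤ) = 2 ^ (e-1) := by rw [hNdef]; push_cast; ring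
  have hcast2 : ((2^e : ℕ) : ℤ) = 2^e := by push_cast; ring
  rw [hcast2] at hd
  have h2e' : (2:ℤ) ^ (e-1) * 2 = 2 ^ e := by rw [← pow_succ]; congr 1; omega
  refine ⟨t - d, ?_⟩
  have hANm : A * ((N:ℤ) * m) = 2 ^ (e-1) * (2 * t + 1) := by
    rw [hNZ, show A * (2 ^ (e-1) * m) = 2 ^ (e-1) * (A * m) by ring, ht]
  have hS : S = 2 ^ (e-1) * (2 * t + 1) - 2 ^ e * d := by linarith [hd, hANm]
  rw [hS, ← h2e']
  ring

theorem stmt_6 (e : ℕ) (he : 2 ≤ e) :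
    padicValInt 2
      (Multiset.esymm
        (((Finset.range (2 ^ (e - 1))).val.map (fun j => (2 * (j : ℤ) + 1))) +
          ((Finset.range (2 ^ (e - 1))).val.map (fun j => -(2 * (j : ℤ) + 1))))
        (2 ^ e - 2)) = e - 1 := by
  haveI : Fact (Nat.Prime 2) := ⟨Nat.prime_two⟩
  have hN : 0 < 2 ^ (e-1) := pow_pos two_pos _
  have h2e : 2 * 2 ^ (e-1) = 2 ^ e := by rw [← pow_succ']; congr 1; omega
  simp only [Multiset.pure_def, Multiset.bind_def, Multiset.bind_singleton, Multiset.map_map, Function.comp_def]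
  rw [show (2:ℕ) ^ e - 2 = 2 * 2 ^ (e-1) - 2 by rw [h2e]]
  rw [esymm_eq (2 ^ (e-1)) hN]
  obtain ⟨q, hq⟩ := S_form e he
  rw [hq]
  have h2e' : (2:ℤ) ^ (e-1) * 2 = 2 ^ e := by rw [← pow_succ]; congr 1; omega
  have hval : (2:ℤ) ^ e * q + 2 ^ (e-1) = 2 ^ (e-1) * (2 * q + 1) := by
    rw [← h2e']; ring
  rw [hval]
  have hodd : Odd (2 * q + 1) := ⟨q, by ring⟩
  have hw0 : (2 * q + 1 : ℤ).natAbs ≠ 0 := by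
    intro h
    have : (2 * q + 1 : ℤ) = 0 := Int.natAbs_eq_zero.mp h
    omega
  have hwodd : Odd (2 * q + 1 : ℤ).natAbs := Int.natAbs_odd.mpr hodd
  have : padicValInt 2 ((-1) ^ (2 ^ (e-1) - 1) * (2 ^ (e-1) * (2 * q + 1)))
      = padicValNat 2 (((-1 : ℤ) ^ (2 ^ (e-1) - 1) * (2 ^ (e-1) * (2 * q + 1))).natAbs) := rfl
  rw [this, Int.natAbs_mul, Int.natAbs_pow, Int.natAbs_neg, Int.natAbs_one, one_pow, one_mul,
    Int.natAbs_mul, Int.natAbs_pow]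
  norm_num
  rw [padicValNat.mul (by positivity) hw0, padicValNat.prime_pow]
  have hz : padicValNat 2 (2 * q + 1 : ℤ).natAbs = 0 := by
    apply padicValNat.eq_zero_of_not_dvd
    rw [Nat.odd_iff] at hwodd
    omega
  rw [hz]
  omega
end

section
/- For every integer e ≥ 3, the 2-adic valuation of f(2^e - 1) is at least 2e, where f(n) = ∑_{k=0}^{n} C(n,k)^{-1}. -/
open Finset

/-!
With `S m = ∑_{k=1}^m 2^k / k` (`twoPowSum`), the recursion `f (n+1) = (n+2)/(2(n+1)) f n + 1`
gives `f n = (n+1)/2^(n+1) · S (n+1)`, so for `N = 2^e` it suffices that `ν₂(S N) ≥ N + e`.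

Summing `2^(j+1)/j = ∑_k (-1)^(j-k) C(k, j-k) 4^k / k` over `j ≤ 2n` and evaluating the inner
alternating binomial sums leaves only terms with `k > n`, each an integer multiple of `4^k / k`;
hence `ν₂(S (2n)) ≥ 2n + 2 - m` whenever `2n < 2^m`. Applied to `S N` this only gives
`N + 1 - e`; instead, writing `1/(N+s) = 1/s - N/(s(N+s))` in the upper half of `S (2N)` gives
`(1 + 2^N) S N = S (2N) + 2^N N ∑_{s ≤ N} 2^s/(s(N+s))`, and both terms on the right have
valuation at least `N + e`.
-/

-- `padicValRat p 0 = 0`, so `0` is admitted separately: it satisfies every lower bound.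
def PadicValGe (p : ℕ) (c : ℤ) (q : ℚ) : Prop := q = 0 ∨ c ≤ padicValRat p q

namespace PadicValGe

variable {p : ℕ} {c d : ℤ} {q r : ℚ}

lemma zero : PadicValGe p c 0 := Or.inl rfl

lemma of_le (h : c ≤ padicValRat p q) : PadicValGe p c q := Or.inr h

lemma le_padicValRat (h : PadicValGe p c q) (hq : q ≠ 0) : c ≤ padicValRat p q :=
  h.resolve_left hq

lemma mono (h : PadicValGe p c q) (hdc : d ≤ c) : PadicValGe p d q :=
  h.imp_right hdc.trans

lemma intCast (z : ℤ) : PadicValGe p 0 z :=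
  of_le (by rw [padicValRat.of_int]; positivity)

variable [Fact p.Prime]

lemma add (hq : PadicValGe p c q) (hr : PadicValGe p c r) : PadicValGe p c (q + r) := by
  rcases hq with rfl | hq
  · simpa using hr
  rcases hr with rfl | hr
  · simpa using of_le hq
  rcases eq_or_ne (q + r) 0 with hqr | hqr
  · exact Or.inl hqr
  · exact of_le ((le_min hq hr).trans (padicValRat.min_le_padicValRat_add hqr))

lemma sum {ι : Type*} {s : Finset ι} {g : ι → ℚ} (h : ∀ i ∈ s, PadicValGe p c (g i)) :
    PadicValGe p c (∑ i ∈ s, g i) := by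
  classical
  induction s using Finset.induction_on with
  | empty => simpa using zero
  | insert a s ha ih =>
    rw [sum_insert ha]
    exact (h a (mem_insert_self a s)).add (ih fun i hi => h i (mem_insert_of_mem hi))

lemma mul (hq : PadicValGe p c q) (hr : PadicValGe p d r) : PadicValGe p (c + d) (q * r) := by
  by_cases hq0 : q = 0
  · simpa [hq0] using zero
  by_cases hr0 : r = 0
  · simpa [hr0] using zero
  refine of_le ?_
  rw [padicValRat.mul hq0 hr0]
  exact add_le_add (hq.le_padicValRat hq0) (hr.le_padicValRat hr0)

lemma inv_natCast (k : ℕ) : PadicValGe p (-padicValNat p k) (k : ℚ)⁻¹ :=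
  of_le (by rw [padicValRat.inv, padicValRat.of_nat])

end PadicValGe

lemma padicValRat_two_pow (j : ℕ) : padicValRat 2 ((2 : ℚ) ^ j) = j := by
  rw [padicValRat.pow, show (2 : ℚ) = (2 : ℕ) by norm_num, padicValRat.self one_lt_two, mul_one]

lemma padicValNat_lt_of_lt_pow {p k m : ℕ} (hk0 : k ≠ 0) (hk : k < p ^ m) :
    padicValNat p k < m :=
  (padicValNat_le_nat_log k).trans_lt (Nat.log_lt_of_lt_pow hk0 hk)

lemma mul_padicValNat_le {p k : ℕ} (hp : p ≠ 1) (hk : k ≠ 0) : p * padicValNat p k ≤ k :=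
  (Nat.mul_le_pow hp _).trans (Nat.le_of_dvd (Nat.pos_of_ne_zero hk) pow_padicValNat_dvd)

def twoPowSum (m : ℕ) : ℚ := ∑ k ∈ Ioc 0 m, 2 ^ k / k

lemma twoPowSum_succ (m : ℕ) : twoPowSum (m + 1) = twoPowSum m + 2 ^ (m + 1) / (m + 1) := by
  rw [twoPowSum, sum_Ioc_succ_top m.zero_le, Nat.cast_succ, twoPowSum]

lemma inv_choose_succ_add_inv_choose_succ_succ {n k : ℕ} (hk : k ≤ n) :
    ((n + 1).choose k : ℚ)⁻¹ + ((n + 1).choose (k + 1) : ℚ)⁻¹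
      = (n + 2) / (n + 1) * (n.choose k : ℚ)⁻¹ := by
  have h₁ : ((n + 1).choose k : ℚ) * (n + 1 - k) = n.choose k * (n + 1) := by
    have := congrArg (Nat.cast : ℕ → ℚ) (Nat.choose_mul_succ_eq n k)
    push_cast [Nat.cast_sub (by omega : k ≤ n + 1)] at this
    linarith
  have h₂ : ((n + 1).choose (k + 1) : ℚ) * (k + 1) = n.choose k * (n + 1) := by
    rw [mul_comm _ ((n : ℚ) + 1)]
    exact_mod_cast (Nat.add_one_mul_choose_eq n k).symm
  have hk' : (n + 1 - k : ℚ) ≠ 0 := by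
    have : (k : ℚ) ≤ n := by exact_mod_cast hk
    linarith
  have ha' : ((n + 1).choose k : ℚ)⁻¹ = (n + 1 - k) / (n.choose k * (n + 1)) := by
    rw [← h₁]; field_simp
  have hb' : ((n + 1).choose (k + 1) : ℚ)⁻¹ = (k + 1) / (n.choose k * (n + 1)) := by
    rw [← h₂]; field_simp
  rw [ha', hb']
  field_simp
  ring

lemma f_succ (n : ℕ) : f (n + 1) = (n + 2) / (2 * (n + 1)) * f n + 1 := by
  have hpairs : ∑ k ∈ range (n + 1),
      (((n + 1).choose k : ℚ)⁻¹ + ((n + 1).choose (k + 1) : ℚ)⁻¹)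
        = (n + 2) / (n + 1) * f n := by
    rw [f, mul_sum]
    exact sum_congr rfl fun k hk =>
      inv_choose_succ_add_inv_choose_succ_succ (Nat.lt_succ_iff.mp (mem_range.mp hk))
  have hlow : ∑ k ∈ range (n + 1), ((n + 1).choose k : ℚ)⁻¹ = f (n + 1) - 1 := by
    rw [f, sum_range_succ _ (n + 1)]
    simp
  have hhigh : ∑ k ∈ range (n + 1), ((n + 1).choose (k + 1) : ℚ)⁻¹ = f (n + 1) - 1 := by
    rw [f, sum_range_succ' _ (n + 1)]
    simp
  rw [sum_add_distrib, hlow, hhigh] at hpairs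
  field_simp at hpairs ⊢
  linarith

lemma f_eq_twoPowSum (n : ℕ) : f n = (n + 1) / 2 ^ (n + 1) * twoPowSum (n + 1) := by
  induction n with
  | zero => norm_num [f, twoPowSum]
  | succ n ih =>
    rw [f_succ, ih, twoPowSum_succ (n + 1)]
    push_cast
    field_simp
    ring

lemma f_pos (n : ℕ) : 0 < f n := by
  refine sum_pos (fun k hk => ?_) nonempty_range_add_one
  have := Nat.choose_pos (Nat.lt_succ_iff.mp (mem_range.mp hk))
  positivity

lemma sum_Ioc_zero_eq_sum_range {M : Type*} [AddCommMonoid M] (g : ℕ → M) (n : ℕ) :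
    ∑ k ∈ Ioc 0 n, g k = ∑ k ∈ range n, g (k + 1) := by
  rw [← Ico_add_one_add_one_eq_Ioc, sum_Ico_eq_sum_range]
  simp [add_comm]

-- The coefficient of `t^m` in `1 / (1 - x t (1 - t))`; for `x = 4` this is `1 / (1 - 2t)^2`.
def diagChooseSum {R : Type*} [CommRing R] (x : R) (m : ℕ) : R :=
  ∑ k ∈ range (m + 1), (-1) ^ (m - k) * (k.choose (m - k) : R) * x ^ k

section diagChooseSum

variable {R : Type*} [CommRing R]

lemma diagChooseSum_eq_sum_Ioc (x : R) {m : ℕ} (hm : m ≠ 0) :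
    diagChooseSum x m = ∑ k ∈ Ioc 0 m, (-1) ^ (m - k) * (k.choose (m - k) : R) * x ^ k := by
  rw [diagChooseSum, sum_range_succ', sum_Ioc_zero_eq_sum_range,
    Nat.choose_eq_zero_of_lt (by omega)]
  simp

lemma diagChooseSum_add_two (x : R) (m : ℕ) :
    diagChooseSum x (m + 2) = x * diagChooseSum x (m + 1) - x * diagChooseSum x m := by
  have hpascal : ∀ k ∈ range (m + 1),
      (-1) ^ (m + 2 - (k + 1)) * ((k + 1).choose (m + 2 - (k + 1)) : R) * x ^ (k + 1)
        = x * ((-1) ^ (m + 1 - k) * (k.choose (m + 1 - k) : R) * x ^ k)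
          - x * ((-1) ^ (m - k) * (k.choose (m - k) : R) * x ^ k) := by
    intro k hk
    have hkm : k ≤ m := Nat.lt_succ_iff.mp (mem_range.mp hk)
    rw [show m + 2 - (k + 1) = m - k + 1 by omega, show m + 1 - k = m - k + 1 by omega,
      Nat.choose_succ_succ]
    push_cast
    ring
  have htop : diagChooseSum x (m + 1)
      = ∑ k ∈ range (m + 1), (-1) ^ (m + 1 - k) * (k.choose (m + 1 - k) : R) * x ^ k
        + x ^ (m + 1) := by
    simp [diagChooseSum, sum_range_succ]
  rw [diagChooseSum, sum_range_succ', sum_range_succ, sum_congr rfl hpascal, sum_sub_distrib,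
    ← mul_sum, ← mul_sum, htop, diagChooseSum]
  simp only [tsub_self, pow_zero, Nat.choose_zero_right, Nat.cast_one, mul_one, one_mul, tsub_zero,
    Nat.choose_eq_zero_of_lt (by omega : 0 < m + 2), Nat.cast_zero, mul_zero, add_zero]
  ring

lemma diagChooseSum_four (m : ℕ) : diagChooseSum (4 : R) m = (m + 1) * 2 ^ m := by
  induction m using Nat.twoStepInduction with
  | zero => simp [diagChooseSum]
  | one => norm_num [diagChooseSum, sum_range_succ]
  | more m ih₀ ih₁ =>
    rw [diagChooseSum_add_two, ih₀, ih₁]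
    push_cast
    ring

end diagChooseSum

lemma mul_sum_Ioc_diagChoose_div {K : Type*} [Field K] [CharZero K] (x : K) (m : ℕ) :
    (m + 2) * ∑ k ∈ Ioc 0 (m + 2), (-1) ^ (m + 2 - k) * (k.choose (m + 2 - k) : K) * x ^ k / k
      = diagChooseSum x (m + 2) - x * diagChooseSum x m := by
  set u : ℕ → K := fun k => (-1) ^ (m + 2 - k) * (k.choose (m + 2 - k) : K) * x ^ k
  have hsplit : ∀ k ∈ Ioc 0 (m + 2), (m + 2) * (u k / k) = u k + (m + 2 - k) / k * u k := by
    intro k hk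
    have : (k : K) ≠ 0 := Nat.cast_ne_zero.mpr (mem_Ioc.mp hk).1.ne'
    field_simp
    ring
  have hshift : ∑ k ∈ Ioc 0 (m + 2), (m + 2 - k) / k * u k = -x * diagChooseSum x m := by
    rw [sum_Ioc_zero_eq_sum_range, sum_range_succ, diagChooseSum, mul_sum]
    push_cast
    rw [show (m : K) + 2 - (m + 1 + 1) = 0 by ring, zero_div, zero_mul, add_zero]
    refine sum_congr rfl fun i hi => ?_
    have him : i ≤ m := Nat.lt_succ_iff.mp (mem_range.mp hi)
    have hchoose : ((m - i + 1 : ℕ) : K) * ((i + 1).choose (m - i + 1) : K)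
        = (i + 1) * (i.choose (m - i) : K) := by
      rw [mul_comm]
      exact_mod_cast (Nat.add_one_mul_choose_eq i (m - i)).symm
    have hi1 : (i : K) + 1 ≠ 0 := Nat.cast_add_one_ne_zero i
    simp only [u]
    rw [show m + 2 - (i + 1) = m - i + 1 by omega,
      show (m : K) + 2 - (i + 1) = ((m - i + 1 : ℕ) : K) by push_cast [Nat.cast_sub him]; ring,
      div_mul_eq_mul_div, div_eq_iff hi1]
    push_cast at hchoose ⊢
    linear_combination ((-1) ^ (m - i + 1) * x ^ (i + 1)) * hchoose
  rw [mul_sum, sum_congr rfl hsplit, sum_add_distrib, hshift,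
    ← diagChooseSum_eq_sum_Ioc x (by omega)]
  ring

lemma sum_Ioc_diagChoose_four_div {j : ℕ} (hj : j ≠ 0) :
    ∑ k ∈ Ioc 0 j, (-1) ^ (j - k) * (k.choose (j - k) : ℚ) * 4 ^ k / k = 2 ^ (j + 1) / j := by
  obtain ⟨m, rfl | rfl⟩ : ∃ m, j = 1 ∨ j = m + 2 := by
    rcases j with _ | _ | m
    · contradiction
    · exact ⟨0, Or.inl rfl⟩
    · exact ⟨m, Or.inr rfl⟩
  · norm_num
  · have h := mul_sum_Ioc_diagChoose_div (4 : ℚ) m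
    rw [diagChooseSum_four, diagChooseSum_four] at h
    rw [eq_div_iff (by positivity), mul_comm]
    push_cast at h ⊢
    rw [h]
    ring

lemma alternating_sum_range_choose_eq_choose_pred {R : Type*} [CommRing R] {k : ℕ}
    (hk : k ≠ 0) (t : ℕ) :
    ∑ i ∈ range (t + 1), (-1 : R) ^ i * (k.choose i : R)
      = (-1) ^ t * ((k - 1).choose t : R) := by
  obtain ⟨k, rfl⟩ := Nat.exists_eq_succ_of_ne_zero hk
  have := congrArg (Int.cast : ℤ → R)
    (Int.alternating_sum_range_choose_eq_choose (n := k) (m := t))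
  push_cast at this
  exact this

lemma two_mul_twoPowSum_two_mul (n : ℕ) :
    2 * twoPowSum (2 * n) = ∑ k ∈ Ioc n (2 * n),
      (-1) ^ (2 * n - k) * ((k - 1).choose (2 * n - k) : ℚ) * 4 ^ k / k := by
  have hdouble : 2 * twoPowSum (2 * n) = ∑ j ∈ Ioc 0 (2 * n),
      ∑ k ∈ Ioc 0 j, (-1) ^ (j - k) * (k.choose (j - k) : ℚ) * 4 ^ k / k := by
    rw [twoPowSum, mul_sum]
    refine sum_congr rfl fun j hj => ?_
    rw [sum_Ioc_diagChoose_four_div (mem_Ioc.mp hj).1.ne', pow_succ]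
    ring
  have hswap : ∑ j ∈ Ioc 0 (2 * n),
      ∑ k ∈ Ioc 0 j, (-1) ^ (j - k) * (k.choose (j - k) : ℚ) * 4 ^ k / k
        = ∑ k ∈ Ioc 0 (2 * n),
      ∑ j ∈ Ico k (2 * n + 1), (-1) ^ (j - k) * (k.choose (j - k) : ℚ) * 4 ^ k / k :=
    sum_comm' fun j k => by simp only [mem_Ioc, mem_Ico]; omega
  have hinner : ∀ k ∈ Ioc 0 (2 * n),
      ∑ j ∈ Ico k (2 * n + 1), (-1) ^ (j - k) * (k.choose (j - k) : ℚ) * 4 ^ k / k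
        = (-1) ^ (2 * n - k) * ((k - 1).choose (2 * n - k) : ℚ) * 4 ^ k / k := by
    intro k hk
    obtain ⟨hk0, hkn⟩ := mem_Ioc.mp hk
    rw [sum_Ico_eq_sum_range, show 2 * n + 1 - k = 2 * n - k + 1 by omega]
    simp only [Nat.add_sub_cancel_left, mul_div_assoc]
    rw [← sum_mul, alternating_sum_range_choose_eq_choose_pred hk0.ne']
  have hlow : ∀ k ∈ Ioc 0 (2 * n), k ∉ Ioc n (2 * n) →
      (-1) ^ (2 * n - k) * ((k - 1).choose (2 * n - k) : ℚ) * 4 ^ k / k = 0 := by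
    intro k hk hkn
    simp only [mem_Ioc] at hk hkn
    rw [Nat.choose_eq_zero_of_lt (by omega : k - 1 < 2 * n - k)]
    simp
  rw [hdouble, hswap, sum_congr rfl hinner]
  exact (sum_subset (Ioc_subset_Ioc_left n.zero_le) hlow).symm

lemma twoPowSum_two_mul_padicValGe {n m : ℕ} (hm : 2 * n < 2 ^ m) :
    PadicValGe 2 (2 * n + 2 - m) (twoPowSum (2 * n)) := by
  have hterm : ∀ k ∈ Ioc n (2 * n), PadicValGe 2 (2 * n + 3 - m)
      ((-1) ^ (2 * n - k) * ((k - 1).choose (2 * n - k) : ℚ) * 4 ^ k / k) := by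
    intro k hk
    obtain ⟨hnk, hkn⟩ := mem_Ioc.mp hk
    have hvk : padicValNat 2 k < m := padicValNat_lt_of_lt_pow (by omega) (by omega)
    have hform : (-1) ^ (2 * n - k) * ((k - 1).choose (2 * n - k) : ℚ) * 4 ^ k / k
        = ((((-1) ^ (2 * n - k) * (k - 1).choose (2 * n - k) : ℤ) : ℚ) * 2 ^ (2 * k))
          * (k : ℚ)⁻¹ := by
      rw [pow_mul]
      push_cast
      ring
    rw [hform]
    exact ((PadicValGe.intCast _).mul (PadicValGe.of_le (padicValRat_two_pow (2 * k)).ge)).mul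
      (PadicValGe.inv_natCast k) |>.mono (by omega)
  have htwo : PadicValGe 2 (-1) (2⁻¹ : ℚ) :=
    PadicValGe.of_le (by simpa using (padicValRat_two_pow 1).le)
  have h := htwo.mul (two_mul_twoPowSum_two_mul n ▸ PadicValGe.sum hterm)
  rw [inv_mul_cancel_left₀ two_ne_zero] at h
  exact h.mono (by omega)

lemma twoPowSum_two_mul_eq (N : ℕ) :
    twoPowSum (2 * N)
      = (1 + 2 ^ N) * twoPowSum N - 2 ^ N * N * ∑ s ∈ Ioc 0 N, 2 ^ s / (s * (N + s) : ℚ) := by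
  have htail : ∑ j ∈ Ioc N (2 * N), (2 : ℚ) ^ j / j
      = ∑ s ∈ Ioc 0 N, (2 : ℚ) ^ (N + s) / (N + s : ℕ) := by
    have : Ioc N (2 * N) = (Ioc 0 N).map (addLeftEmbedding N) := by
      rw [map_add_left_Ioc, add_zero, two_mul]
    rw [this, sum_map]
    rfl
  have hsplit : ∀ s ∈ Ioc 0 N, (2 : ℚ) ^ (N + s) / (N + s : ℕ)
      = 2 ^ N * (2 ^ s / s) - 2 ^ N * N * (2 ^ s / (s * (N + s))) := by
    intro s hs
    have : (s : ℚ) ≠ 0 := Nat.cast_ne_zero.mpr (mem_Ioc.mp hs).1.ne'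
    push_cast
    field_simp
    ring
  rw [twoPowSum, ← sum_Ioc_consecutive _ N.zero_le (by omega : N ≤ 2 * N), htail,
    sum_congr rfl hsplit, sum_sub_distrib, ← mul_sum, ← mul_sum, twoPowSum]
  ring

lemma padicValRat_mul_two_pow_add_le {e s : ℕ} (he : 2 * e < 2 ^ e) (hs : s ∈ Ioc 0 (2 ^ e)) :
    padicValRat 2 ((s : ℚ) * (2 ^ e + s)) ≤ s := by
  obtain ⟨hs0, hse⟩ := mem_Ioc.mp hs
  have hsQ : (s : ℚ) ≠ 0 := Nat.cast_ne_zero.mpr hs0.ne'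
  rw [padicValRat.mul hsQ (by positivity), padicValRat.of_nat]
  rcases hse.lt_or_eq with hlt | rfl
  · have hvs : padicValNat 2 s < e := padicValNat_lt_of_lt_pow hs0.ne' hlt
    rw [add_comm (2 ^ e : ℚ), padicValRat.add_eq_of_lt (by positivity) hsQ (by positivity)
      (by rw [padicValRat_two_pow, padicValRat.of_nat]; exact_mod_cast hvs), padicValRat.of_nat]
    have := mul_padicValNat_le (p := 2) (by norm_num) hs0.ne'
    omega
  · have heZ : (2 * e : ℤ) < 2 ^ e := by exact_mod_cast he
    push_cast
    rw [← two_mul, ← pow_succ']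
    simp only [padicValRat_two_pow]
    push_cast
    omega

lemma twoPowSum_two_pow_padicValGe {e : ℕ} (he : 2 * e < 2 ^ e) :
    PadicValGe 2 (2 ^ e + e) (twoPowSum (2 ^ e)) := by
  set N := 2 ^ e with hN
  have hNcast : (N : ℚ) = 2 ^ e := by rw [hN]; push_cast; rfl
  have hdouble : PadicValGe 2 (2 * N - e) (twoPowSum (2 * N)) := by
    have h := twoPowSum_two_mul_padicValGe (n := N) (m := e + 2) (by rw [pow_add, ← hN]; omega)
    exact h.mono (by push_cast; omega)
  have hcross : PadicValGe 2 0 (∑ s ∈ Ioc 0 N, 2 ^ s / (s * (N + s) : ℚ)) := by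
    refine PadicValGe.sum fun s hs => PadicValGe.of_le ?_
    have hs0 : (s : ℚ) ≠ 0 := Nat.cast_ne_zero.mpr (mem_Ioc.mp hs).1.ne'
    rw [hNcast, padicValRat.div (by positivity) (by positivity), padicValRat_two_pow]
    linarith [padicValRat_mul_two_pow_add_le he hs]
  have hunit : PadicValGe 2 0 ((1 + 2 ^ N : ℚ)⁻¹) := by
    refine PadicValGe.of_le ?_
    have hodd : ¬ 2 ∣ 1 + 2 ^ N := by
      rw [Nat.dvd_add_left (dvd_pow_self 2 (by positivity))]
      norm_num
    rw [padicValRat.inv, show (1 + 2 ^ N : ℚ) = ((1 + 2 ^ N : ℕ) : ℚ) by push_cast; rfl,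
      padicValRat.of_nat, padicValNat.eq_zero_of_not_dvd hodd]
    simp
  have hpow : PadicValGe 2 (N + e) (2 ^ N * N : ℚ) :=
    PadicValGe.of_le (by rw [hNcast, ← pow_add, padicValRat_two_pow]; push_cast; rfl)
  have hsolve : twoPowSum N = (1 + 2 ^ N)⁻¹
      * (twoPowSum (2 * N) + 2 ^ N * N * ∑ s ∈ Ioc 0 N, 2 ^ s / (s * (N + s) : ℚ)) := by
    rw [twoPowSum_two_mul_eq]
    field_simp
    ring
  have heN : (2 * e : ℤ) < N := by exact_mod_cast he
  rw [hsolve]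
  exact (hunit.mul ((hdouble.mono (by omega)).add (hpow.mul hcross))).mono
    (by push_cast [hN]; omega)

lemma two_mul_lt_two_pow {e : ℕ} (he : 3 ≤ e) : 2 * e < 2 ^ e := by
  induction e, he using Nat.le_induction with
  | base => norm_num
  | succ n _ ih => rw [pow_succ]; omega

theorem stmt_8 (e : ℕ) (he : 3 ≤ e) :
    (2 * e : ℤ) ≤ padicValRat 2 (f (2 ^ e - 1)) := by
  have hf : f (2 ^ e - 1) = 2 ^ e / 2 ^ 2 ^ e * twoPowSum (2 ^ e) := by
    rw [f_eq_twoPowSum, Nat.sub_add_cancel Nat.one_le_two_pow]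
    push_cast [Nat.cast_sub Nat.one_le_two_pow]
    ring
  have hS : twoPowSum (2 ^ e) ≠ 0 := fun h => (f_pos _).ne' (by rw [hf, h, mul_zero])
  have hv := (twoPowSum_two_pow_padicValGe (two_mul_lt_two_pow he)).le_padicValRat hS
  rw [hf, padicValRat.mul (by positivity) hS, padicValRat.div (by positivity) (by positivity),
    padicValRat_two_pow, padicValRat_two_pow]
  push_cast at hv ⊢
  omega
end

section
/- The sequence (f(2^e - 1))_{e ≥ 0} converges to 0 in ℚ_2, where f(n) = ∑_{k=0}^{n} C(n,k)^{-1}. Equivalently, ν_2(f(2^e-1)) → ∞ as e → ∞. -/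
open Finset Polynomial

section Integral

variable {K : Type*} [Field K]

noncomputable def integralFromZero (x : K) : K[X] →ₗ[K] K :=
  lsum fun n => (x ^ (n + 1) / (n + 1)) • LinearMap.id

theorem integralFromZero_monomial (x a : K) (n : ℕ) :
    integralFromZero x (monomial n a) = a * x ^ (n + 1) / (n + 1) := by
  simp only [integralFromZero, lsum_apply, LinearMap.smul_apply, LinearMap.id_apply,
    smul_eq_mul, mul_zero, sum_monomial_index]
  ring

theorem integralFromZero_geom_sum (x : K) (N : ℕ) :
    integralFromZero x (∑ k ∈ range N, X ^ k) = ∑ k ∈ range N, x ^ (k + 1) / (k + 1) := by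
  simp [← monomial_one_right_eq_X_pow, integralFromZero_monomial]

variable [CharZero K]

theorem integralFromZero_derivative (x : K) (q : K[X]) :
    integralFromZero x (derivative q) = q.eval x - q.eval 0 := by
  induction q using Polynomial.induction_on' with
  | add p q hp hq => simp only [map_add, hp, hq, eval_add]; ring
  | monomial n a =>
    rcases n with _ | n
    · simp
    · have := Nat.cast_add_one_ne_zero (R := K) n
      rw [derivative_monomial, integralFromZero_monomial, eval_monomial, eval_monomial,
        zero_pow n.succ_ne_zero, mul_zero, sub_zero, Nat.add_sub_cancel]
      push_cast
      field_simp

theorem exists_derivative_eq (p : K[X]) : ∃ q, derivative q = p := by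
  induction p using Polynomial.induction_on' with
  | add p q hp hq =>
    obtain ⟨P, rfl⟩ := hp
    obtain ⟨Q, rfl⟩ := hq
    exact ⟨P + Q, derivative_add⟩
  | monomial n a =>
    refine ⟨monomial (n + 1) (a / (n + 1)), ?_⟩
    have := Nat.cast_add_one_ne_zero (R := K) n
    rw [derivative_monomial]
    push_cast
    field_simp

theorem integralFromZero_derivative_mul_comp {x : K} {g : K[X]} (hg : g.eval x = g.eval 0)
    (p : K[X]) : integralFromZero x (derivative g * p.comp g) = 0 := by
  obtain ⟨q, rfl⟩ := exists_derivative_eq p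
  rw [← derivative_comp, integralFromZero_derivative, eval_comp, eval_comp, hg, sub_self]

end Integral

theorem one_sub_X_mul_geom_sum_comp {R : Type*} [CommRing R] [IsDomain R] (N : ℕ) :
    (1 - X : R[X]) * ∑ k ∈ range N, (X * (2 - X)) ^ k
      = ∑ k ∈ range N, X ^ k - X ^ N * ∑ i ∈ range N, (2 - X) ^ i := by
  have hX : (1 - X : R[X]) ≠ 0 := by
    intro h
    simpa using congrArg (coeff · 0) h
  apply mul_left_cancel₀ hX
  have g1 := geom_sum_mul (X * (2 - X) : R[X]) N
  have g2 := geom_sum_mul (X : R[X]) N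
  have g3 := geom_sum_mul (2 - X : R[X]) N
  rw [mul_pow] at g1
  linear_combination -g1 + g2 + X ^ N * g3

theorem integralFromZero_two_geom_sum_eq {K : Type*} [Field K] [CharZero K] (N : ℕ) :
    integralFromZero (2 : K) (∑ k ∈ range N, X ^ k)
      = integralFromZero 2 (X ^ N * ∑ i ∈ range N, (2 - X) ^ i) := by
  have hsub := integralFromZero_derivative_mul_comp (x := (2 : K)) (g := X * (2 - X))
    (by simp) (∑ k ∈ range N, X ^ k)
  have hderiv : derivative (X * (2 - X) : K[X]) = C 2 * (1 - X) := by
    rw [derivative_mul, derivative_sub, derivative_X, derivative_ofNat, C_ofNat]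
    ring
  simp only [hderiv, Polynomial.sum_comp, pow_comp, X_comp] at hsub
  rw [mul_assoc, one_sub_X_mul_geom_sum_comp, ← smul_eq_C_mul, map_smul, map_sub,
    smul_eq_zero, sub_eq_zero] at hsub
  exact hsub.resolve_left two_ne_zero

theorem inv_choose_add_inv_choose_succ {n k : ℕ} (hk : k ≤ n) :
    (((n + 1).choose k : ℚ))⁻¹ + (((n + 1).choose (k + 1) : ℚ))⁻¹
      = (n + 2) / (n + 1) * ((n.choose k : ℚ))⁻¹ := by
  have h₁ : ((n + 1 : ℕ) : ℚ) * n.choose k = (n + 1).choose (k + 1) * (k + 1 : ℕ) := by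
    exact_mod_cast Nat.add_one_mul_choose_eq n k
  have h₂ : (n.choose k : ℚ) * (n + 1 : ℕ) = (n + 1).choose k * (n + 1 - k : ℕ) := by
    exact_mod_cast Nat.choose_mul_succ_eq n k
  have hc : (n.choose k : ℚ) ≠ 0 := mod_cast (Nat.choose_pos hk).ne'
  have hc₁ : ((n + 1).choose k : ℚ) ≠ 0 := mod_cast (Nat.choose_pos (by omega)).ne'
  have hc₂ : ((n + 1).choose (k + 1) : ℚ) ≠ 0 := mod_cast (Nat.choose_pos (by omega)).ne'
  push_cast [Nat.cast_sub (by omega : k ≤ n + 1)] at h₁ h₂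
  field_simp
  linear_combination ((n + 1).choose k : ℚ) * h₁ + ((n + 1).choose (k + 1) : ℚ) * h₂

theorem two_mul_f_succ (n : ℕ) : 2 * f (n + 1) = 2 + (n + 2) / (n + 1) * f n := by
  have hpair : ∑ k ∈ range (n + 1),
      ((((n + 1).choose k : ℚ))⁻¹ + (((n + 1).choose (k + 1) : ℚ))⁻¹)
        = (n + 2) / (n + 1) * f n := by
    rw [f, mul_sum]
    exact sum_congr rfl fun k hk =>
      inv_choose_add_inv_choose_succ (Nat.lt_succ_iff.mp (mem_range.mp hk))
  have hlast : f (n + 1) = ∑ k ∈ range (n + 1), (((n + 1).choose k : ℚ))⁻¹ + 1 := by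
    simp [f, sum_range_succ _ (n + 1)]
  have hfirst : f (n + 1) = ∑ k ∈ range (n + 1), (((n + 1).choose (k + 1) : ℚ))⁻¹ + 1 := by
    simp [f, sum_range_succ' _ (n + 1)]
  rw [← hpair, sum_add_distrib]
  linarith

theorem two_pow_div_mul_f_eq_sum (n : ℕ) :
    2 ^ (n + 1) / (n + 1) * f n = ∑ k ∈ range (n + 1), (2 : ℚ) ^ (k + 1) / (k + 1) := by
  induction n with
  | zero => simp [f]
  | succ n ih =>
    rw [sum_range_succ, ← ih]
    have hrec := two_mul_f_succ n
    field_simp at hrec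
    push_cast
    field_simp
    linear_combination (2 : ℚ) ^ (n + 1) * hrec

theorem padicValRat_two_two : padicValRat 2 2 = 1 := by
  exact_mod_cast padicValRat.self (p := 2) one_lt_two

theorem padicNorm_two_pow_div_self {m : ℕ} (hm : m ≠ 0) :
    padicNorm 2 ((2 : ℚ) ^ m / m) = 2 ^ (-(m - padicValNat 2 m : ℤ)) := by
  rw [padicNorm.eq_zpow_of_nonzero (by positivity),
    padicValRat.div (by positivity) (by positivity), padicValRat.pow, padicValRat.of_nat,
    padicValRat_two_two]
  simp

theorem padicNorm_two_zpow (z : ℤ) : padicNorm 2 ((2 : ℚ) ^ z) = 2 ^ (-z) := by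
  rw [padicNorm.eq_zpow_of_nonzero (by positivity), padicValRat.zpow, padicValRat_two_two]
  simp

theorem padicValNat_two_pow_add_lt {e j : ℕ} (he : 2 ≤ e) (hj : 0 < j) :
    padicValNat 2 (2 ^ e + j) < j := by
  set v := padicValNat 2 (2 ^ e + j)
  have hdvd : 2 ^ v ∣ 2 ^ e + j := pow_padicValNat_dvd
  rcases le_or_gt v e with hve | hev
  · have : 2 ^ v ∣ j := (Nat.dvd_add_right (pow_dvd_pow 2 hve)).mp hdvd
    exact Nat.lt_two_pow_self.trans_le (Nat.le_of_dvd hj this)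
  · have hle : 2 ^ (e + 1) ≤ 2 ^ e + j :=
      Nat.le_of_dvd (by positivity) ((pow_dvd_pow 2 hev).trans hdvd)
    have h4 : 2 ^ 2 ≤ 2 ^ e := Nat.pow_le_pow_right two_pos he
    by_contra! hjv
    have h2v : 2 ^ j ≤ 2 ^ v := Nat.pow_le_pow_right two_pos hjv
    have hv : 2 ^ v ≤ 2 ^ e + j := Nat.le_of_dvd (by positivity) hdvd
    have hj2 := Nat.lt_two_pow_self (n := j - 2)
    have : 2 ^ j = 2 ^ 2 * 2 ^ (j - 2) := by rw [← pow_add]; congr 1; omega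
    rw [pow_succ] at hle
    omega

theorem padicNorm_integralFromZero_two_map_le {p : ℤ[X]} {t : ℚ} (ht : 0 ≤ t)
    (hp : ∀ n ∈ p.support, padicNorm 2 ((2 : ℚ) ^ (n + 1) / (n + 1)) ≤ t) :
    padicNorm 2 (integralFromZero 2 (p.map (Int.castRingHom ℚ))) ≤ t := by
  rw [integralFromZero, lsum_apply, sum_def, support_map_of_injective _ (RingHom.injective_int _)]
  refine padicNorm.sum_le' (fun n hn => ?_) ht
  simp only [coeff_map, eq_intCast, LinearMap.smul_apply, LinearMap.id_apply, smul_eq_mul]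
  rw [padicNorm.mul]
  calc padicNorm 2 ((2 : ℚ) ^ (n + 1) / (n + 1)) * padicNorm 2 (p.coeff n)
      ≤ t * 1 := mul_le_mul (hp n hn) (padicNorm.of_int _) (padicNorm.nonneg _) ht
    _ = t := mul_one t

theorem padicNorm_integralFromZero_two_X_pow_mul_le {e : ℕ} (he : 2 ≤ e) (q : ℤ[X]) :
    padicNorm 2 (integralFromZero 2 ((X ^ 2 ^ e * q).map (Int.castRingHom ℚ)))
      ≤ 2 ^ (-(2 ^ e + 1 : ℤ)) := by
  refine padicNorm_integralFromZero_two_map_le (by positivity) fun n hn => ?_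
  have hn : 2 ^ e ≤ n := by
    by_contra h
    simp [mem_support_iff, coeff_X_pow_mul', h] at hn
  obtain ⟨j, rfl⟩ := Nat.exists_eq_add_of_le hn
  have hv := padicValNat_two_pow_add_lt (j := j + 1) he j.succ_pos
  rw [← add_assoc] at hv
  have hcast : ((2 ^ e + j : ℕ) : ℚ) + 1 = ((2 ^ e + j + 1 : ℕ) : ℚ) := by push_cast; ring
  rw [hcast, padicNorm_two_pow_div_self (m := 2 ^ e + j + 1) (by positivity)]
  refine zpow_le_zpow_right₀ one_le_two ?_
  simp only [Nat.cast_add, Nat.cast_pow, Nat.cast_ofNat, Nat.cast_one]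
  omega

theorem padicNorm_f_two_pow_sub_one_le {e : ℕ} (he : 2 ≤ e) :
    padicNorm 2 (f (2 ^ e - 1)) ≤ 2 ^ (-(e + 1 : ℤ)) := by
  set N := 2 ^ e
  have hN : N - 1 + 1 = N := Nat.sub_add_cancel Nat.one_le_two_pow
  have hsum := two_pow_div_mul_f_eq_sum (N - 1)
  rw [hN, ← integralFromZero_geom_sum, integralFromZero_two_geom_sum_eq] at hsum
  have hcast : ((N - 1 : ℕ) : ℚ) + 1 = 2 ^ e := by
    rw [← Nat.cast_add_one, hN, Nat.cast_pow, Nat.cast_ofNat]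
  have hmap : (X ^ N * ∑ i ∈ range N, (2 - X) ^ i : ℚ[X])
      = (X ^ N * ∑ i ∈ range N, (2 - X) ^ i : ℤ[X]).map (Int.castRingHom ℚ) := by
    simp [Polynomial.map_sum]
  have hf : f (N - 1) = 2 ^ ((e : ℤ) - N) * integralFromZero 2
      ((X ^ N * ∑ i ∈ range N, (2 - X) ^ i : ℤ[X]).map (Int.castRingHom ℚ)) := by
    rw [← hmap, ← hsum, hcast, zpow_sub₀ two_ne_zero, zpow_natCast, zpow_natCast]
    field_simp
  calc padicNorm 2 (f (N - 1))
      ≤ 2 ^ (-((e : ℤ) - N)) * 2 ^ (-(N + 1 : ℤ)) := by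
        rw [hf, padicNorm.mul, padicNorm_two_zpow]
        exact mul_le_mul_of_nonneg_left
          (padicNorm_integralFromZero_two_X_pow_mul_le he _) (by positivity)
    _ = 2 ^ (-(e + 1 : ℤ)) := by
        rw [← zpow_add₀ two_ne_zero]
        ring_nf

theorem stmt_9 :
    Filter.Tendsto (fun e : ℕ => ((f (2 ^ e - 1) : ℚ) : ℚ_[2]))
      Filter.atTop (nhds 0) := by
  refine squeeze_zero_norm' (a := fun e : ℕ => (2 : ℝ)⁻¹ ^ (e + 1)) ?_ ?_
  · filter_upwards [Filter.eventually_ge_atTop 2] with e he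
    rw [Padic.eq_padicNorm]
    have h := (Rat.cast_le (K := ℝ)).mpr (padicNorm_f_two_pow_sub_one_le he)
    rwa [Rat.cast_zpow, Rat.cast_ofNat, zpow_neg, ← Nat.cast_add_one, zpow_natCast,
      ← inv_pow] at h
  · exact (tendsto_pow_atTop_nhds_zero_of_lt_one (by norm_num) (by norm_num)).comp
      (Filter.tendsto_add_atTop_nat 1)
end

section
/- Let p be a prime and let 0 ≤ C ≤ A < p and 0 ≤ D ≤ B < p. Then C(Ap+B, Cp+D)^{-1} - C(A,C)^{-1}·C(B,D)^{-1} ≡ p·C(A,C)^{-1}·C(B,D)^{-1}·(C·∑_{i=1}^{D} 1/i + (A-C)·∑_{i=1}^{B-D} 1/i - A·∑_{i=1}^{B} 1/i) modulo p², as a congruence of p-integral rationals. -/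
open Finset Nat

private def Wf (p j : ℕ) : ℕ := ∏ i ∈ Icc 1 (p-1), (j*p+i)
private def Pf (p n r : ℕ) : ℕ := ∏ i ∈ Icc 1 r, (n*p+i)
private def gf (p n r : ℕ) : ℕ := (∏ j ∈ range n, Wf p j) * Pf p n r
private def hf (r : ℕ) : ℕ := ∑ i ∈ Icc 1 r, r ! / i

private lemma prod_Icc_id (n : ℕ) : (∏ i ∈ Icc 1 n, i) = n ! := by
  rw [← Finset.Ico_add_one_right_eq_Icc]; exact Finset.prod_Ico_id_eq_factorial n

private lemma tele (a : ℕ) : ∀ m : ℕ, (a + m)! = a ! * ∏ i ∈ Icc 1 m, (a + i) := by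
  intro m
  induction m with
  | zero => simp
  | succ m ih =>
      rw [Finset.prod_Icc_succ_top (by omega), ← mul_assoc, ← ih, ← add_assoc,
        Nat.factorial_succ, mul_comm]

private lemma Pf_zero (p r : ℕ) : Pf p 0 r = r ! := by
  unfold Pf; simp [prod_Icc_id]

private lemma fact_eq (p : ℕ) (hp : 0 < p) : ∀ n r, r < p → (n*p+r)! = p^n * n ! * gf p n r := by
  intro n
  induction n with
  | zero => intro r hr; simp [gf, Pf_zero]
  | succ n ih =>
      intro r hr
      have e1 : ((n+1)*p + r)! = ((n+1)*p)! * Pf p (n+1) r := by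
        rw [tele ((n+1)*p) r]; rfl
      have e2 : ((n+1)*p)! = (n*p + (p-1))! * (p * (n+1)) := by
        have h : (n+1)*p = (n*p + (p-1)) + 1 := by
          cases p with | zero => omega | succ q => ring_nf; omega
        have h2 : n*p + (p-1) + 1 = p * (n+1) := by
          have h3 : p*(n+1) = n*p + p := by ring
          omega
        rw [h, Nat.factorial_succ, h2, mul_comm]
      have e3 : (n*p + (p-1))! = p^n * n ! * gf p n (p-1) := ih (p-1) (by omega)
      have e4 : gf p n (p-1) * Pf p (n+1) r = gf p (n+1) r := by
        unfold gf Pf Wf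
        rw [Finset.prod_range_succ]
      rw [e1, e2, e3, ← e4]
      rw [Nat.factorial_succ, pow_succ]
      ring

private lemma key_exact (p : ℕ) (hp : 0 < p) (A B C D : ℕ)
    (hCA : C ≤ A) (hA : A < p) (hDB : D ≤ B) (hB : B < p) :
    (A*p+B).choose (C*p+D) * gf p C D * gf p (A-C) (B-D) = A.choose C * gf p A B := by
  have hle : C*p+D ≤ A*p+B := by
    have := Nat.mul_le_mul_right p hCA
    omega
  have hmul : A*p = (A-C)*p + C*p := by
    rw [← Nat.add_mul]
    congr 1
    omega
  have hsub : (A*p+B) - (C*p+D) = (A-C)*p + (B-D) := by omega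
  have e0 := Nat.choose_mul_factorial_mul_factorial hle
  rw [hsub] at e0
  rw [fact_eq p hp C D (by omega), fact_eq p hp (A-C) (B-D) (by omega),
    fact_eq p hp A B hB] at e0
  have eA : A ! = A.choose C * C ! * (A-C)! := (Nat.choose_mul_factorial_mul_factorial hCA).symm
  rw [eA] at e0
  have epow : p^C * p^(A-C) = p^A := by
    rw [← pow_add]
    congr 1
    omega
  apply Nat.eq_of_mul_eq_mul_left (show 0 < p^A * C ! * (A-C)! by positivity)
  calc p^A * C ! * (A-C)! * ((A*p+B).choose (C*p+D) * gf p C D * gf p (A-C) (B-D))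
      = (A*p+B).choose (C*p+D) * (p^C * C ! * gf p C D) * (p^(A-C) * (A-C)! * gf p (A-C) (B-D)) := by
        rw [← epow]; ring
    _ = p ^ A * (A.choose C * C ! * (A-C)!) * gf p A B := e0
    _ = p^A * C ! * (A-C)! * (A.choose C * gf p A B) := by ring

private lemma hf_succ (r : ℕ) : hf (r+1) = (r+1) * hf r + r ! := by
  unfold hf
  rw [Finset.sum_Icc_succ_top (by omega)]
  have h1 : (r+1)! / (r+1) = r ! := by
    rw [Nat.factorial_succ, Nat.mul_div_cancel_left _ (by omega)]
  rw [h1, Finset.mul_sum]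
  congr 1
  apply Finset.sum_congr rfl
  intro i hi
  rw [Finset.mem_Icc] at hi
  rw [Nat.factorial_succ, Nat.mul_div_assoc _ (Nat.dvd_factorial (by omega) hi.2)]

private lemma Pf_cong (p : ℕ) (n r : ℕ) :
    ((Pf p n r : ℕ) : ZMod (p^2)) = ((r ! + n * p * hf r : ℕ) : ZMod (p^2)) := by
  induction r with
  | zero => simp [Pf, hf]
  | succ r ih =>
      have hp2 : ((p : ZMod (p^2)))^2 = 0 := by
        have h := ZMod.natCast_self (p^2)
        push_cast at h
        exact h
      have e : Pf p n (r+1) = Pf p n r * (n*p + (r+1)) := by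
        unfold Pf
        rw [Finset.prod_Icc_succ_top (by omega)]
      rw [e, Nat.cast_mul, ih, hf_succ, Nat.factorial_succ]
      push_cast
      linear_combination (n : ZMod (p^2))^2 * (hf r : ZMod (p^2)) * hp2

private lemma icc_sum_two (p : ℕ) (hp : p.Prime) : (∑ i ∈ Icc 1 (p-1), i) * 2 = p * (p-1) := by
  have h1 : Icc 1 (p-1) = Ico 1 p := by
    rw [← Finset.Ico_add_one_right_eq_Icc]
    congr 1
    have := hp.one_lt
    omega
  have h2 := Finset.sum_range_id_mul_two p
  rw [Finset.range_eq_Ico, Finset.sum_eq_sum_Ico_succ_bot hp.pos] at h2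
  norm_num at h2
  rw [h1]
  omega

private lemma wolst (p : ℕ) (hp : p.Prime) (hodd : p ≠ 2) : p ∣ hf (p-1) := by
  haveI : Fact p.Prime := ⟨hp⟩
  rw [← ZMod.natCast_eq_zero_iff]
  unfold hf
  push_cast
  have hterm : ∀ i ∈ Icc 1 (p-1), (((p-1)! / i : ℕ) : ZMod p) = ((p-1)! : ℕ) * ((i:ℕ) : ZMod p)⁻¹ := by
    intro i hi
    rw [Finset.mem_Icc] at hi
    have hne : ((i:ℕ) : ZMod p) ≠ 0 := by
      rw [Ne, ZMod.natCast_eq_zero_iff]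
      intro hdvd
      have := Nat.le_of_dvd (by omega) hdvd
      omega
    rw [Nat.cast_div (Nat.dvd_factorial (by omega) hi.2) hne, div_eq_mul_inv]
  rw [Finset.sum_congr rfl hterm, ← Finset.mul_sum]
  have hS : (∑ i ∈ Icc 1 (p-1), ((i:ℕ) : ZMod p)⁻¹) = ∑ i ∈ Icc 1 (p-1), ((i:ℕ) : ZMod p) := by
    apply Finset.sum_nbij' (fun i => (((i:ℕ) : ZMod p)⁻¹).val) (fun i => (((i:ℕ) : ZMod p)⁻¹).val)
    · intro a ha
      rw [Finset.mem_Icc] at ha ⊢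
      have hne : ((a:ℕ) : ZMod p) ≠ 0 := by
        rw [Ne, ZMod.natCast_eq_zero_iff]
        intro hdvd
        have := Nat.le_of_dvd (by omega) hdvd
        omega
      have hinv : ((a:ℕ) : ZMod p)⁻¹ ≠ 0 := inv_ne_zero hne
      have h1 : (((a:ℕ) : ZMod p)⁻¹).val ≠ 0 := by
        rw [Ne, ZMod.val_eq_zero]; exact hinv
      have h2 := ZMod.val_lt ((a:ℕ) : ZMod p)⁻¹
      omega
    · intro a ha
      rw [Finset.mem_Icc] at ha ⊢
      have hne : ((a:ℕ) : ZMod p) ≠ 0 := by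
        rw [Ne, ZMod.natCast_eq_zero_iff]
        intro hdvd
        have := Nat.le_of_dvd (by omega) hdvd
        omega
      have hinv : ((a:ℕ) : ZMod p)⁻¹ ≠ 0 := inv_ne_zero hne
      have h1 : (((a:ℕ) : ZMod p)⁻¹).val ≠ 0 := by
        rw [Ne, ZMod.val_eq_zero]; exact hinv
      have h2 := ZMod.val_lt ((a:ℕ) : ZMod p)⁻¹
      omega
    · intro a ha
      rw [Finset.mem_Icc] at ha
      have := hp.one_lt
      simp only [ZMod.natCast_val, ZMod.cast_id, inv_inv, ZMod.val_natCast]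
      exact Nat.mod_eq_of_lt (by omega)
    · intro a ha
      rw [Finset.mem_Icc] at ha
      have := hp.one_lt
      simp only [ZMod.natCast_val, ZMod.cast_id, inv_inv, ZMod.val_natCast]
      exact Nat.mod_eq_of_lt (by omega)
    · intro a _
      simp [ZMod.natCast_val, ZMod.cast_id]
  rw [hS, ← Nat.cast_sum]
  have hdvd : p ∣ ∑ i ∈ Icc 1 (p-1), i := by
    have h2 := icc_sum_two p hp
    have hpd : p ∣ (∑ i ∈ Icc 1 (p-1), i) * 2 := h2 ▸ Dvd.intro _ rfl
    have hcop : Nat.Coprime p 2 := (Nat.coprime_primes hp Nat.prime_two).mpr hodd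
    exact (Nat.Coprime.dvd_of_dvd_mul_right hcop) hpd
  rw [(ZMod.natCast_eq_zero_iff _ _).mpr hdvd, mul_zero]

private lemma Wf_cast (p : ℕ) (hp : p.Prime) (hodd : p ≠ 2) (j : ℕ) :
    ((Wf p j : ℕ) : ZMod (p^2)) = (((p-1)! : ℕ) : ZMod (p^2)) := by
  have hW : Wf p j = Pf p j (p-1) := rfl
  rw [hW, Pf_cong p j (p-1)]
  have h0 : ((p * hf (p-1) : ℕ) : ZMod (p^2)) = 0 := by
    rw [ZMod.natCast_eq_zero_iff]
    obtain ⟨k, hk⟩ := wolst p hp hodd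
    exact ⟨k, by rw [hk]; ring⟩
  push_cast at h0 ⊢
  linear_combination (j : ZMod (p^2)) * h0

private lemma prodW (p : ℕ) (hp : p.Prime) (n : ℕ) (hn : n < p) :
    ((∏ j ∈ range n, Wf p j : ℕ) : ZMod (p^2)) = (((p-1)! : ℕ) : ZMod (p^2))^n := by
  by_cases hodd : p = 2
  · subst hodd
    interval_cases n
    · simp
    · simp [Wf]
  · rw [Nat.cast_prod]
    rw [Finset.prod_congr rfl (fun j _ => Wf_cast p hp hodd j)]
    rw [Finset.prod_const, Finset.card_range]

private lemma harm_eq (r : ℕ) : (∑ i ∈ Icc 1 r, (1:ℚ)/i) = (hf r : ℚ) / (r ! : ℚ) := by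
  rw [eq_div_iff (by exact_mod_cast r.factorial_pos.ne' : ((r ! : ℚ)) ≠ 0)]
  unfold hf
  push_cast
  rw [Finset.sum_mul]
  apply Finset.sum_congr rfl
  intro i hi
  rw [Finset.mem_Icc] at hi
  rw [Nat.cast_div (Nat.dvd_factorial (by omega) hi.2) (by exact_mod_cast (by omega : i ≠ 0) : ((i:ℚ)) ≠ 0)]
  field_simp

theorem stmt_11 (p : ℕ) (hp : p.Prime) (A B C D : ℕ)
    (hCA : C ≤ A) (hA : A < p) (hDB : D ≤ B) (hB : B < p) :
    ((((A * p + B).choose (C * p + D) : ℚ))⁻¹ -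
        ((A.choose C : ℚ))⁻¹ * ((B.choose D : ℚ))⁻¹ -
      (p : ℚ) * ((A.choose C : ℚ))⁻¹ * ((B.choose D : ℚ))⁻¹ *
        ((C : ℚ) * (∑ i ∈ Finset.Icc 1 D, (1 : ℚ) / i) +
          ((A : ℚ) - C) * (∑ i ∈ Finset.Icc 1 (B - D), (1 : ℚ) / i) -
          (A : ℚ) * (∑ i ∈ Finset.Icc 1 B, (1 : ℚ) / i))) = 0 ∨
    2 ≤ padicValRat p
      ((((A * p + B).choose (C * p + D) : ℚ))⁻¹ -
        ((A.choose C : ℚ))⁻¹ * ((B.choose D : ℚ))⁻¹ -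
      (p : ℚ) * ((A.choose C : ℚ))⁻¹ * ((B.choose D : ℚ))⁻¹ *
        ((C : ℚ) * (∑ i ∈ Finset.Icc 1 D, (1 : ℚ) / i) +
          ((A : ℚ) - C) * (∑ i ∈ Finset.Icc 1 (B - D), (1 : ℚ) / i) -
          (A : ℚ) * (∑ i ∈ Finset.Icc 1 B, (1 : ℚ) / i))) := by
  haveI : Fact p.Prime := ⟨hp⟩
  set X := (A * p + B).choose (C * p + D) with hX
  set Y1 := A.choose C with hY1
  set Y2 := B.choose D with hY2
  -- basic divisibility facts
  have hple : C*p+D ≤ A*p+B := by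
    have := Nat.mul_le_mul_right p hCA
    omega
  have hXpos : 0 < X := Nat.choose_pos hple
  have hY1pos : 0 < Y1 := Nat.choose_pos hCA
  have hY2pos : 0 < Y2 := Nat.choose_pos hDB
  have hfacA : Y1 * C ! * (A-C)! = A ! := Nat.choose_mul_factorial_mul_factorial hCA
  have hfacB : Y2 * D ! * (B-D)! = B ! := Nat.choose_mul_factorial_mul_factorial hDB
  have hpY1 : ¬ p ∣ Y1 := by
    intro hd
    have : p ∣ A ! := hfacA ▸ Dvd.dvd.mul_right (hd.mul_right _) _
    rw [hp.dvd_factorial] at this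
    omega
  have hpY2 : ¬ p ∣ Y2 := by
    intro hd
    have : p ∣ B ! := hfacB ▸ Dvd.dvd.mul_right (hd.mul_right _) _
    rw [hp.dvd_factorial] at this
    omega
  have hpB : ¬ p ∣ B ! := by
    rw [hp.dvd_factorial]; omega
  have hpD : ¬ p ∣ D ! := by
    rw [hp.dvd_factorial]; omega
  have hpB' : ¬ p ∣ (B-D)! := by
    rw [hp.dvd_factorial]; omega
  -- the star congruence in ZMod p^2
  have hwnd : ¬ p ∣ (p-1)! := by
    rw [hp.dvd_factorial]
    have := hp.one_lt
    omega
  have star : (X : ZMod (p^2)) * ((D ! : ℕ) + (C:ZMod (p^2))*p*(hf D : ℕ)) *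
        (((B-D)! : ℕ) + ((A-C : ℕ):ZMod (p^2))*p*(hf (B-D) : ℕ)) =
      (Y1 : ZMod (p^2)) * ((B ! : ℕ) + (A:ZMod (p^2))*p*(hf B : ℕ)) := by
    have E0 := key_exact p hp.pos A B C D hCA hA hDB hB
    have E : (X : ZMod (p^2)) * (gf p C D : ℕ) * (gf p (A-C) (B-D) : ℕ)
        = (Y1 : ZMod (p^2)) * (gf p A B : ℕ) := by
      have := congrArg (fun m : ℕ => (m : ZMod (p^2))) E0
      push_cast at this
      exact this
    have gcast : ∀ n r, n < p → ((gf p n r : ℕ) : ZMod (p^2)) =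
        (((p-1)! : ℕ) : ZMod (p^2))^n * ((r ! : ℕ) + (n:ZMod (p^2))*p*(hf r : ℕ)) := by
      intro n r hn
      unfold gf
      rw [Nat.cast_mul, prodW p hp n hn, Pf_cong p n r]
      push_cast
      ring
    rw [gcast C D (by omega), gcast (A-C) (B-D) (by omega), gcast A B hA] at E
    have hwA : IsUnit ((((p-1)! : ℕ) : ZMod (p^2))^A) := by
      apply IsUnit.pow
      rw [ZMod.isUnit_iff_coprime]
      exact ((hp.coprime_iff_not_dvd.mpr hwnd).symm).pow_right 2
    apply hwA.mul_left_cancel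
    have hpow : ((((p-1)! : ℕ) : ZMod (p^2)))^C * ((((p-1)! : ℕ) : ZMod (p^2)))^(A-C)
        = ((((p-1)! : ℕ) : ZMod (p^2)))^A := by
      rw [← pow_add]
      congr 1
      omega
    calc (((p-1)! : ℕ) : ZMod (p^2))^A * ((X : ZMod (p^2)) * (((D !:ℕ)) + (C:ZMod (p^2))*p*(hf D:ℕ)) * ((((B-D)!:ℕ)) + ((A-C:ℕ):ZMod (p^2))*p*(hf (B-D):ℕ)))
        = (((p-1)!:ℕ) : ZMod (p^2))^C * (X : ZMod (p^2)) * (((D !:ℕ)) + (C:ZMod (p^2))*p*(hf D:ℕ)) * ((((p-1)!:ℕ) : ZMod (p^2))^(A-C) * ((((B-D)!:ℕ)) + ((A-C:ℕ):ZMod (p^2))*p*(hf (B-D):ℕ))) := by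
          rw [← hpow]; ring
      _ = (((p-1)!:ℕ) : ZMod (p^2))^A * ((Y1 : ZMod (p^2)) * (((B !:ℕ)) + (A:ZMod (p^2))*p*(hf B:ℕ))) := by
          linear_combination E
  have hp2 : ((p : ZMod (p^2)))^2 = 0 := by
    have h := ZMod.natCast_self (p^2)
    push_cast at h
    exact h
  -- Lucas
  have lucasZ : (X : ZMod p) = (Y1 : ZMod p) * (Y2 : ZMod p) := by
    have hs := congrArg (ZMod.castHom (dvd_pow_self p two_ne_zero) (ZMod p)) star
    simp only [map_mul, map_add, map_natCast, ZMod.natCast_self, mul_zero, zero_mul, add_zero] at hs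
    have hfacC : ((B ! : ℕ) : ZMod p) = ((Y2 * D ! * (B-D)! : ℕ) : ZMod p) := by rw [hfacB]
    have hu : IsUnit ((D ! * (B-D)! : ℕ) : ZMod p) := by
      rw [ZMod.isUnit_iff_coprime]
      exact (hp.coprime_iff_not_dvd.mpr (by
        intro hd
        rcases (Nat.Prime.dvd_mul hp).mp hd with h | h
        · exact hpD h
        · exact hpB' h)).symm
    apply hu.mul_left_cancel
    push_cast at hs hfacC ⊢
    linear_combination hs + (Y1 : ZMod p) * hfacC
  have lucas : (p:ℤ) ∣ ((Y1:ℤ) * Y2 - X) := by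
    rw [← ZMod.intCast_zmod_eq_zero_iff_dvd]
    push_cast
    rw [lucasZ]
    ring
  -- the integer N and its divisibility by p^2
  have hNdvd : (p:ℤ)^2 ∣ (((Y1:ℤ)*Y2 - X)*(B !) - p*X*Y2*((C:ℤ)*hf D*((B-D)!) + ((A-C:ℕ):ℤ)*hf (B-D)*(D !)) + p*A*hf B*X) := by
    have key : ((((Y1:ℤ)*Y2 - X)*(B !) - p*X*Y2*((C:ℤ)*hf D*((B-D)!) + ((A-C:ℕ):ℤ)*hf (B-D)*(D !)) + p*A*hf B*X : ℤ) : ZMod (p^2)) = 0 := by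
      have hc : (((p:ℤ)*((X:ℤ) - (Y1:ℤ)*Y2) : ℤ) : ZMod (p^2)) = 0 := by
        rw [ZMod.intCast_zmod_eq_zero_iff_dvd]
        obtain ⟨k, hk⟩ := lucas
        refine ⟨-k, ?_⟩
        have : ((X:ℤ) - (Y1:ℤ)*Y2) = -(p*k) := by omega
        rw [this]
        push_cast
        ring
      have hfacC : ((B ! : ℕ) : ZMod (p^2)) = ((Y2 * D ! * (B-D)! : ℕ) : ZMod (p^2)) := by rw [hfacB]
      push_cast at hc hfacC ⊢
      linear_combination (-(Y2:ZMod (p^2)))*star + (-(X:ZMod (p^2)))*hfacC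
        + (A:ZMod (p^2))*((hf B : ℕ):ZMod (p^2))*hc
        + (X:ZMod (p^2))*(Y2:ZMod (p^2))*(C:ZMod (p^2))*((A-C:ℕ):ZMod (p^2))*((hf D : ℕ):ZMod (p^2))*((hf (B-D) : ℕ):ZMod (p^2))*hp2
    rw [ZMod.intCast_zmod_eq_zero_iff_dvd] at key
    exact_mod_cast key
  -- p does not divide X
  have hpX : ¬ p ∣ X := by
    intro hd
    have h1 : (p:ℤ) ∣ ((Y1:ℤ)*Y2) := by
      obtain ⟨k, hk⟩ := lucas
      obtain ⟨m, hm⟩ := hd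
      refine ⟨k + m, ?_⟩
      have : (X:ℤ) = p*m := by exact_mod_cast hm
      rw [mul_add, ← hk, this]
      ring
    have h2 : p ∣ Y1*Y2 := by exact_mod_cast h1
    rcases (Nat.Prime.dvd_mul hp).mp h2 with h | h
    · exact hpY1 h
    · exact hpY2 h
  -- nonzero denominators in ℚ
  have hXQ : (X:ℚ) ≠ 0 := by exact_mod_cast hXpos.ne'
  have hY1Q : (Y1:ℚ) ≠ 0 := by exact_mod_cast hY1pos.ne'
  have hY2Q : (Y2:ℚ) ≠ 0 := by exact_mod_cast hY2pos.ne'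
  have hDQ : ((D ! : ℕ):ℚ) ≠ 0 := by exact_mod_cast D.factorial_pos.ne'
  have hBQ : ((B ! : ℕ):ℚ) ≠ 0 := by exact_mod_cast B.factorial_pos.ne'
  have hB'Q : (((B-D)! : ℕ):ℚ) ≠ 0 := by exact_mod_cast (B-D).factorial_pos.ne'
  have hMQ : ((X*Y1*Y2*B ! : ℕ):ℚ) ≠ 0 := by
    push_cast
    positivity
  have hACQ : ((A:ℚ) - C) = ((A-C : ℕ):ℚ) := by
    push_cast [Nat.cast_sub hCA]
    ring
  have hfacBQ : ((B ! : ℕ):ℚ) = (Y2:ℚ) * (D ! : ℕ) * ((B-D)! : ℕ) := by exact_mod_cast congrArg (fun m : ℕ => (m:ℚ)) hfacB.symm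
  set N : ℤ := ((Y1:ℤ)*Y2 - X)*(B !) - p*X*Y2*((C:ℤ)*hf D*((B-D)!) + ((A-C:ℕ):ℤ)*hf (B-D)*(D !)) + p*A*hf B*X with hNdef
  have hQeq : ((X : ℚ))⁻¹ - ((Y1 : ℚ))⁻¹ * ((Y2 : ℚ))⁻¹ -
      (p : ℚ) * ((Y1 : ℚ))⁻¹ * ((Y2 : ℚ))⁻¹ *
        ((C : ℚ) * (∑ i ∈ Finset.Icc 1 D, (1 : ℚ) / i) +
          ((A : ℚ) - C) * (∑ i ∈ Finset.Icc 1 (B - D), (1 : ℚ) / i) -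
          (A : ℚ) * (∑ i ∈ Finset.Icc 1 B, (1 : ℚ) / i)) = (N:ℚ) / ((X*Y1*Y2*B ! : ℕ):ℚ) := by
    rw [harm_eq D, harm_eq (B-D), harm_eq B, hACQ, eq_div_iff hMQ, hNdef]
    push_cast
    rw [hfacBQ]
    field_simp
    ring
  rcases eq_or_ne N 0 with h0 | h0
  · left
    rw [hQeq, h0]
    simp
  · right
    rw [hQeq]
    have hNQ : ((N:ℚ)) ≠ 0 := Int.cast_ne_zero.mpr h0
    rw [padicValRat.div hNQ hMQ]
    have h1 : padicValRat p ((N:ℤ):ℚ) = padicValInt p N := padicValRat.of_int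
    have h2 : padicValRat p ((X*Y1*Y2*B ! : ℕ):ℚ) = padicValNat p (X*Y1*Y2*B !) := padicValRat.of_nat
    have hpM : ¬ p ∣ (X*Y1*Y2*B !) := by
      intro hd
      rcases (Nat.Prime.dvd_mul hp).mp hd with h | h
      · rcases (Nat.Prime.dvd_mul hp).mp h with h' | h'
        · rcases (Nat.Prime.dvd_mul hp).mp h' with h'' | h''
          · exact hpX h''
          · exact hpY1 h''
        · exact hpY2 h'
      · exact hpB h
    rw [h1, h2, padicValNat.eq_zero_of_not_dvd hpM]
    have hval := (padicValInt_dvd_iff 2 N).mp (by exact_mod_cast hNdvd)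
    rcases hval with h | h
    · exact absurd h h0
    · simp only [Nat.cast_zero, sub_zero]
      exact_mod_cast h
end

section
/- For every odd prime p and every e ≥ 1, ∑_{k=1}^{p-1} C(p^e - 1, k)^{-1} ≡ p^{e-1}·(1 - 2^{p-1}) (mod p^{e+1}), as a congruence of p-integral rationals. -/
/-!
For `q = p^e` and `k < p`, `C(q-1,k)⁻¹ = ∏_{j ≤ k} j / (q - j) ≡ (-1)^k (1 + q H_k) (mod q²)`.
Summed over `1 ≤ k ≤ p - 1` this leaves the alternating sum `q ∑ (-1)^k H_k = q H_{(p-1)/2} / 2`,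
and Eisenstein's congruence `H_{(p-1)/2} ≡ -2 q_p(2) (mod p)` for the Fermat quotient
`q_p(2) = (2^{p-1} - 1)/p` turns this into `p^{e-1} (1 - 2^{p-1})` modulo `p^{e+1}`.
-/

open Finset IsAbsoluteValue

namespace padicNorm

variable {p : ℕ} [Fact p.Prime]

theorem natCast_eq_one_of_pos_of_lt {j : ℕ} (h0 : 0 < j) (hj : j < p) :
    padicNorm p (j : ℚ) = 1 :=
  (nat_eq_one_iff j).2 (Nat.not_dvd_of_pos_of_lt h0 hj)

theorem sub_eq_of_lt {x y : ℚ} (h : padicNorm p x < padicNorm p y) :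
    padicNorm p (x - y) = padicNorm p y := by
  rw [sub_eq_add_neg, add_eq_max_of_ne (by rw [padicNorm.neg]; exact h.ne), padicNorm.neg,
    max_eq_right h.le]

theorem two_eq_one_of_ne_two (hp : p ≠ 2) : padicNorm p 2 = 1 := by
  exact_mod_cast natCast_eq_one_of_pos_of_lt two_pos
    ((Fact.out : p.Prime).two_le.lt_of_ne' hp)

theorem harmonic_le_one {k : ℕ} (hk : k < p) : padicNorm p (harmonic k) ≤ 1 := by
  rw [harmonic_eq_sum_Icc]
  refine sum_le' (fun j hj => ?_) zero_le_one
  rw [mem_Icc] at hj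
  rw [abv_inv (padicNorm p), natCast_eq_one_of_pos_of_lt (by omega) (by omega), inv_one]

theorem le_padicValRat_of_le_inv_pow {x : ℚ} (hx : x ≠ 0) {n : ℕ}
    (h : padicNorm p x ≤ (p : ℚ)⁻¹ ^ n) : (n : ℤ) ≤ padicValRat p x := by
  have hp : (1 : ℚ) < p := by exact_mod_cast (Fact.out : p.Prime).one_lt
  rw [padicNorm.eq_zpow_of_nonzero hx, inv_pow, ← zpow_natCast, ← zpow_neg] at h
  simpa using (zpow_le_zpow_iff_right₀ hp).1 h

theorem intCast_le_inv_of_dvd {z : ℤ} (h : (p : ℤ) ∣ z) : padicNorm p (z : ℚ) ≤ (p : ℚ)⁻¹ := by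
  simpa using (dvd_iff_norm_le (n := 1)).1 (by simpa using h)

end padicNorm

theorem Nat.inv_choose_succ {n k : ℕ} (hk : k < n) :
    (n.choose (k + 1) : ℚ)⁻¹ = (n.choose k : ℚ)⁻¹ * ((k + 1 : ℕ) / ((n : ℚ) - k)) := by
  have h := Nat.choose_succ_right_eq n k
  have hnk : (n : ℚ) - k ≠ 0 := sub_ne_zero.2 (by exact_mod_cast hk.ne')
  have hc : (n.choose (k + 1) : ℚ) ≠ 0 := by exact_mod_cast (Nat.choose_pos hk).ne'
  have hc' : (n.choose k : ℚ) ≠ 0 := by exact_mod_cast (Nat.choose_pos hk.le).ne'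
  rw [← Nat.cast_inj (R := ℚ)] at h
  push_cast [hk.le] at h ⊢
  field_simp
  exact h.symm

theorem Nat.Prime.dvd_choose_sub_one_sub_neg_one_pow {p j : ℕ} (hp : p.Prime) (hj : j < p) :
    (p : ℤ) ∣ ((p - 1).choose j : ℤ) - (-1) ^ j := by
  induction j with
  | zero => simp
  | succ j ih =>
    have hpascal := Nat.choose_succ_succ' (p - 1) j
    rw [Nat.sub_add_cancel hp.one_le, ← Nat.cast_inj (R := ℤ)] at hpascal
    have hdvd : (p : ℤ) ∣ (p.choose (j + 1) : ℤ) :=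
      Int.natCast_dvd_natCast.2 (hp.dvd_choose_self j.succ_ne_zero hj)
    push_cast at hpascal
    have hsplit : ((p - 1).choose (j + 1) : ℤ) - (-1) ^ (j + 1)
        = p.choose (j + 1) - (((p - 1).choose j : ℤ) - (-1) ^ j) := by
      rw [hpascal]; ring
    rw [hsplit]
    exact _root_.dvd_sub hdvd (ih (by omega))

theorem sum_range_choose_div_succ (n : ℕ) :
    ∑ j ∈ range (n + 1), (n.choose j : ℚ) / (j + 1) = (2 ^ (n + 1) - 1) / (n + 1) := by
  have hterm (j : ℕ) : (n.choose j : ℚ) / (j + 1) = ((n + 1).choose (j + 1) : ℚ) / (n + 1) := by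
    have h := Nat.add_one_mul_choose_eq n j
    rw [← Nat.cast_inj (R := ℚ)] at h
    push_cast at h
    field_simp
    linear_combination h
  have hsum : ∑ j ∈ range (n + 1), ((n + 1).choose (j + 1) : ℚ) = 2 ^ (n + 1) - 1 := by
    have h := Nat.sum_range_choose (n + 1)
    rw [← Nat.cast_inj (R := ℚ), sum_range_succ'] at h
    push_cast [Nat.choose_zero_right] at h
    linear_combination h
  simp_rw [hterm, ← sum_div, hsum]

theorem sum_range_neg_one_pow_div_succ (m : ℕ) :
    ∑ j ∈ range (2 * m), (-1 : ℚ) ^ j / (j + 1) = harmonic (2 * m) - harmonic m := by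
  induction m with
  | zero => simp
  | succ m ih =>
    rw [show 2 * (m + 1) = 2 * m + 1 + 1 by ring, sum_range_succ, sum_range_succ, ih,
      harmonic_succ, harmonic_succ, harmonic_succ, pow_succ, pow_mul]
    push_cast
    field_simp
    ring

theorem sum_Icc_neg_one_pow_mul_one_add_harmonic (c : ℚ) (m : ℕ) :
    ∑ k ∈ Icc 1 (2 * m), (-1 : ℚ) ^ k * (1 + c * harmonic k) = c * harmonic m / 2 := by
  induction m with
  | zero => simp
  | succ m ih =>
    have heven : (-1 : ℚ) ^ (2 * m) = 1 := by rw [pow_mul]; simp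
    rw [show 2 * (m + 1) = 2 * m + 1 + 1 by ring, sum_Icc_succ_top (by omega),
      sum_Icc_succ_top (by omega), ih, harmonic_succ (2 * m + 1), harmonic_succ m,
      pow_succ (-1 : ℚ) (2 * m + 1), pow_succ (-1 : ℚ) (2 * m), heven]
    push_cast
    field_simp
    ring

def fermatQuotient (p : ℕ) (a : ℚ) : ℚ := (a ^ (p - 1) - 1) / p

section

variable {p : ℕ} [Fact p.Prime]

/-- Each factor `j / (q - j)` of `C(q-1,k)⁻¹ = ∏_{j ≤ k} j / (q - j)` is `-(1 + q/j)` up to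
`O(q²)`. -/
theorem padicNorm_inv_choose_sub_le {q k : ℕ} (hq : p ∣ q) (hq0 : q ≠ 0) (hk : k < p) :
    padicNorm p (((q - 1).choose k : ℚ)⁻¹ - (-1) ^ k * (1 + q * harmonic k))
      ≤ padicNorm p q ^ 2 := by
  induction k with
  | zero => simp [sq_nonneg]
  | succ k ih =>
    have hpq : p ≤ q := Nat.le_of_dvd (Nat.pos_of_ne_zero hq0) hq
    set m : ℚ := ((k + 1 : ℕ) : ℚ) with hm
    have hm1 : padicNorm p m = 1 := padicNorm.natCast_eq_one_of_pos_of_lt k.succ_pos hk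
    have hqm1 : padicNorm p (q - m) = 1 := by
      rw [padicNorm.sub_eq_of_lt] <;> rw [hm1]
      exact (padicNorm.nat_lt_one_iff q).2 hq
    have hm0 : m ≠ 0 := by rintro h; simp [h] at hm1
    have hqm0 : (q : ℚ) - m ≠ 0 := by rintro h; simp [h] at hqm1
    have hstep : ((q - 1).choose k : ℚ)⁻¹ * (m / ((q - 1 : ℕ) - k))
          - (-1) ^ (k + 1) * (1 + q * harmonic (k + 1))
        = m / (q - m) * (((q - 1).choose k : ℚ)⁻¹ - (-1) ^ k * (1 + q * harmonic k))
          + (-1) ^ k * q ^ 2 * harmonic (k + 1) / (q - m) := by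
      have hcast : (((q - 1 : ℕ) : ℚ) - k) = q - m := by
        rw [hm, Nat.cast_sub (by omega)]; push_cast; ring
      rw [hcast, harmonic_succ, ← hm]
      field_simp
      ring
    rw [Nat.inv_choose_succ (by omega), ← hm, hstep]
    refine padicNorm.nonarchimedean.trans (max_le ?_ ?_)
    · rw [padicNorm.mul, padicNorm.div, hm1, hqm1, div_one, one_mul]
      exact ih (by omega)
    · rw [padicNorm.div, padicNorm.mul, padicNorm.mul, abv_pow (padicNorm p), hqm1, div_one,
        abv_pow (padicNorm p), padicNorm.neg, padicNorm.one, one_pow, one_mul]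
      exact mul_le_of_le_one_right (by positivity) (padicNorm.harmonic_le_one hk)

theorem padicNorm_harmonic_sub_one_le (hp : p ≠ 2) :
    padicNorm p (harmonic (p - 1)) ≤ (p : ℚ)⁻¹ := by
  have hreflect : harmonic (p - 1) = ∑ j ∈ range (p - 1), ((p : ℚ) - (j + 1 : ℕ))⁻¹ := by
    rw [harmonic, ← sum_range_reflect]
    refine sum_congr rfl fun j hj => ?_
    rw [mem_range] at hj
    rw [show p - 1 - 1 - j + 1 = p - (j + 1) by omega, Nat.cast_sub (by omega)]
  have hpair : 2 * harmonic (p - 1) = ∑ j ∈ range (p - 1),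
      p * (((j + 1 : ℕ) : ℚ)⁻¹ * ((p : ℚ) - (j + 1 : ℕ))⁻¹) := by
    nth_rw 1 [two_mul, harmonic, hreflect, ← sum_add_distrib]
    refine sum_congr rfl fun j hj => ?_
    rw [mem_range] at hj
    have hj0 : ((j + 1 : ℕ) : ℚ) ≠ 0 := by positivity
    have hpj : (p : ℚ) - (j + 1 : ℕ) ≠ 0 :=
      sub_ne_zero.2 (by exact_mod_cast (by omega : p ≠ j + 1))
    rw [inv_add_inv hj0 hpj, add_sub_cancel, div_eq_mul_inv, mul_inv]
  rw [← one_mul (padicNorm p _), ← padicNorm.two_eq_one_of_ne_two hp, ← padicNorm.mul, hpair]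
  refine padicNorm.sum_le' (fun j hj => ?_) (by positivity)
  rw [mem_range] at hj
  have hj1 : padicNorm p ((j + 1 : ℕ) : ℚ) = 1 :=
    padicNorm.natCast_eq_one_of_pos_of_lt j.succ_pos (by omega)
  have hpj1 : padicNorm p ((p : ℚ) - (j + 1 : ℕ)) = 1 := by
    rw [padicNorm.sub_eq_of_lt] <;> rw [hj1]
    exact padicNorm.padicNorm_p_lt_one_of_prime
  rw [padicNorm.mul, padicNorm.mul, abv_inv (padicNorm p), abv_inv (padicNorm p), hj1, hpj1,
    padicNorm.padicNorm_p_of_prime]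
  simp

/-- Eisenstein: `2 q_p(2) = ∑_{j < p-1} C(p-1,j)/(j+1)` and `C(p-1,j) ≡ (-1)^j (mod p)`. -/
theorem padicNorm_harmonic_add_two_mul_fermatQuotient_two_le (hp : p ≠ 2) :
    padicNorm p (harmonic ((p - 1) / 2) + 2 * fermatQuotient p 2) ≤ (p : ℚ)⁻¹ := by
  have hprime : p.Prime := Fact.out
  obtain ⟨m, hm⟩ : ∃ m, p - 1 = 2 * m := by
    obtain ⟨m, hm⟩ := hprime.odd_of_ne_two hp
    exact ⟨m, by omega⟩
  obtain ⟨n, rfl⟩ : ∃ n, p = n + 1 := ⟨p - 1, by have := hprime.one_le; omega⟩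
  rw [Nat.add_sub_cancel] at hm ⊢
  have hexpand : 2 * fermatQuotient (n + 1) 2 = ∑ j ∈ range n, (n.choose j : ℚ) / (j + 1) := by
    have h := sum_range_choose_div_succ n
    rw [sum_range_succ, Nat.choose_self] at h
    rw [fermatQuotient, Nat.add_sub_cancel]
    push_cast at h ⊢
    field_simp at h ⊢
    linear_combination -h
  have hsplit : harmonic (n / 2) + 2 * fermatQuotient (n + 1) 2
      = harmonic n + ∑ j ∈ range n, (((n.choose j : ℤ) - (-1) ^ j : ℤ) : ℚ) / (j + 1) := by
    rw [hexpand, hm, Nat.mul_div_cancel_left m two_pos]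
    push_cast
    simp_rw [sub_div, sum_sub_distrib, sum_range_neg_one_pow_div_succ]
    ring
  rw [hsplit]
  refine padicNorm.nonarchimedean.trans (max_le (padicNorm_harmonic_sub_one_le hp) ?_)
  refine padicNorm.sum_le' (fun j hj => ?_) (by positivity)
  rw [mem_range] at hj
  rw [padicNorm.div, show (j : ℚ) + 1 = (j + 1 : ℕ) by push_cast; rfl,
    padicNorm.natCast_eq_one_of_pos_of_lt j.succ_pos (by omega), div_one]
  exact padicNorm.intCast_le_inv_of_dvd (hprime.dvd_choose_sub_one_sub_neg_one_pow (by omega))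

theorem padicNorm_sum_inv_choose_prime_pow_sub_le {e : ℕ} (he : 1 ≤ e) :
    padicNorm p (∑ k ∈ Icc 1 (p - 1),
        (((p ^ e - 1).choose k : ℚ)⁻¹ - (-1) ^ k * (1 + (p : ℚ) ^ e * harmonic k)))
      ≤ (p : ℚ)⁻¹ ^ (e + 1) := by
  have hprime : p.Prime := Fact.out
  refine padicNorm.sum_le' (fun k hk => ?_) (by positivity)
  rw [mem_Icc] at hk
  have h := padicNorm_inv_choose_sub_le (dvd_pow_self p (by omega : e ≠ 0))
    (pow_ne_zero e hprime.ne_zero) (by omega : k < p)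
  rw [Nat.cast_pow, abv_pow (padicNorm p), padicNorm.padicNorm_p_of_prime, ← pow_mul] at h
  exact h.trans (pow_le_pow_of_le_one (by positivity)
    (inv_le_one_of_one_le₀ (mod_cast hprime.one_le)) (by omega))

theorem padicNorm_prime_pow_mul_harmonic_sub_le (hp : p ≠ 2) {e : ℕ} (he : 1 ≤ e) :
    padicNorm p ((p : ℚ) ^ e * harmonic ((p - 1) / 2) / 2 - p ^ (e - 1) * (1 - 2 ^ (p - 1)))
      ≤ (p : ℚ)⁻¹ ^ (e + 1) := by
  have hp0 : (p : ℚ) ≠ 0 := by exact_mod_cast (Fact.out : p.Prime).ne_zero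
  have hpe : (p : ℚ) ^ e = p ^ (e - 1) * p := by rw [← pow_succ, Nat.sub_add_cancel he]
  have hfactor : (p : ℚ) ^ e * harmonic ((p - 1) / 2) / 2 - p ^ (e - 1) * (1 - 2 ^ (p - 1))
      = p ^ (e - 1) * p * 2⁻¹ * (harmonic ((p - 1) / 2) + 2 * fermatQuotient p 2) := by
    rw [fermatQuotient, hpe]
    field_simp
    ring
  rw [hfactor, padicNorm.mul, padicNorm.mul, padicNorm.mul, abv_pow (padicNorm p),
    padicNorm.padicNorm_p_of_prime, abv_inv (padicNorm p), padicNorm.two_eq_one_of_ne_two hp,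
    inv_one, mul_one, ← pow_succ, Nat.sub_add_cancel he, pow_succ]
  exact mul_le_mul_of_nonneg_left
    (padicNorm_harmonic_add_two_mul_fermatQuotient_two_le hp) (by positivity)

end

theorem stmt_12 (p : ℕ) (hp : p.Prime) (hodd : Odd p) (e : ℕ) (he : 1 ≤ e) :
    (∑ k ∈ Finset.Icc 1 (p - 1), (((p ^ e - 1).choose k : ℚ))⁻¹) -
        (p : ℚ) ^ (e - 1) * (1 - 2 ^ (p - 1)) = 0 ∨
    (e : ℤ) + 1 ≤ padicValRat p
      ((∑ k ∈ Finset.Icc 1 (p - 1), (((p ^ e - 1).choose k : ℚ))⁻¹) -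
        (p : ℚ) ^ (e - 1) * (1 - 2 ^ (p - 1))) := by
  have : Fact p.Prime := ⟨hp⟩
  have hp2 : p ≠ 2 := by rintro rfl; exact absurd hodd (by decide)
  obtain ⟨m, hm⟩ : ∃ m, p - 1 = 2 * m := by obtain ⟨m, hm⟩ := hodd; exact ⟨m, by omega⟩
  have hsplit : (∑ k ∈ Finset.Icc 1 (p - 1), (((p ^ e - 1).choose k : ℚ))⁻¹) -
        (p : ℚ) ^ (e - 1) * (1 - 2 ^ (p - 1))
      = ∑ k ∈ Icc 1 (p - 1),
          ((((p ^ e - 1).choose k : ℚ))⁻¹ - (-1) ^ k * (1 + (p : ℚ) ^ e * harmonic k))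
        + ((p : ℚ) ^ e * harmonic ((p - 1) / 2) / 2 - p ^ (e - 1) * (1 - 2 ^ (p - 1))) := by
    rw [sum_sub_distrib, hm, sum_Icc_neg_one_pow_mul_one_add_harmonic,
      Nat.mul_div_cancel_left m two_pos]
    ring
  refine (eq_or_ne _ 0).imp id fun hD => ?_
  refine mod_cast padicNorm.le_padicValRat_of_le_inv_pow hD ?_
  rw [hsplit]
  exact padicNorm.nonarchimedean.trans (max_le (padicNorm_sum_inv_choose_prime_pow_sub_le he)
    (padicNorm_prime_pow_mul_harmonic_sub_le hp2 he))
end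

section
/- For a prime p > 3 and any integer k ≥ 0, ∏_{i=1}^{p-1} (pk + i) ≡ ∏_{i=1}^{p-1} (pk + i - m) (mod p^{e+2}) whenever m is divisible by p^e with e ≥ 1. Equivalently, for e ≥ 1 and b not divisible by p, ∏_{i=1}^{p-1}(pk+i) ≡ ∏_{i=1}^{p-1}(pk+i-b·p^e) mod p^{e+2}. -/
/-!
Write `f = (X + 1)(X + 2)⋯(X + (p - 1)) = ∑ cₘ Xᵐ`. If `a` divides `x` and `y`, then
`aᵐ⁻¹ (x - y)` divides `xᵐ - yᵐ`, so `a² (x - y)` divides `f x - f y` as soon as `a² ∣ c₁`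
and `a ∣ c₂`. For `a = p` these are Wolstenholme's congruences. Modulo `p`, `f` is monic of
degree `p - 1` and vanishes at every nonzero residue, so it is `X ^ (p - 1) - 1` and `p ∣ c₂`
once `p > 3`. Since `p - 1` is even, `f (-p) = f 0`; expanding `f (-p)` modulo `p³` then gives
`p³ ∣ p c₁`. Finally take `x = pk - bpᵉ` and `y = pk`.
-/

open Polynomial Finset

theorem pow_pred_mul_sub_dvd_pow_sub_pow {R : Type*} [CommRing R] {a x y : R}
    (hx : a ∣ x) (hy : a ∣ y) (m : ℕ) : a ^ (m - 1) * (x - y) ∣ x ^ m - y ^ m := by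
  rw [← geom_sum₂_mul]
  refine mul_dvd_mul_right (dvd_sum fun i hi => ?_) _
  have hi' : i ≤ m - 1 := Nat.le_sub_one_of_lt (mem_range.mp hi)
  simpa only [← pow_add, Nat.add_sub_cancel' hi'] using
    mul_dvd_mul (pow_dvd_pow_of_dvd hx i) (pow_dvd_pow_of_dvd hy (m - 1 - i))

namespace Polynomial

theorem pow_mul_sub_dvd_eval_sub_eval {R : Type*} [CommRing R] {a x y : R} {n : ℕ} (f : R[X])
    (hf : ∀ m ≠ 0, a ^ (n + 1 - m) ∣ f.coeff m) (hx : a ∣ x) (hy : a ∣ y) :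
    a ^ n * (x - y) ∣ f.eval x - f.eval y := by
  rw [eval_eq_sum_range, eval_eq_sum_range, ← sum_sub_distrib]
  refine dvd_sum fun m _ => ?_
  rw [← mul_sub]
  rcases eq_or_ne m 0 with rfl | hm
  · simp
  · calc a ^ n * (x - y) ∣ a ^ (n + 1 - m) * (a ^ (m - 1) * (x - y)) := by
          rw [← mul_assoc, ← pow_add]
          exact mul_dvd_mul_right (pow_dvd_pow a (by omega)) _
      _ ∣ f.coeff m * (x ^ m - y ^ m) :=
          mul_dvd_mul (hf m hm) (pow_pred_mul_sub_dvd_pow_sub_pow hx hy m)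

end Polynomial

noncomputable def shiftedPochhammer (n : ℕ) : ℤ[X] := ∏ i ∈ Icc 1 n, (X + C (i : ℤ))

@[simp]
theorem eval_shiftedPochhammer (n : ℕ) (x : ℤ) :
    (shiftedPochhammer n).eval x = ∏ i ∈ Icc 1 n, (x + i) := by
  simp [shiftedPochhammer, eval_prod]

theorem map_shiftedPochhammer_zmod {p : ℕ} [Fact p.Prime] :
    (shiftedPochhammer (p - 1)).map (Int.castRingHom (ZMod p)) = X ^ (p - 1) - 1 := by
  have hp1 := (Fact.out : p.Prime).one_lt
  have hnodal : (shiftedPochhammer (p - 1)).map (Int.castRingHom (ZMod p))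
      = Lagrange.nodal (Icc 1 (p - 1)) (fun i : ℕ => -(i : ZMod p)) := by
    simp [shiftedPochhammer, Lagrange.nodal, Polynomial.map_prod]
  have hinj : Set.InjOn (fun i : ℕ => -(i : ZMod p)) (Icc 1 (p - 1)) := by
    intro i hi j hj hij
    simp only [coe_Icc, Set.mem_Icc, neg_inj] at hi hj hij
    rw [ZMod.natCast_eq_natCast_iff'] at hij
    rwa [Nat.mod_eq_of_lt (by omega), Nat.mod_eq_of_lt (by omega)] at hij
  have hdeg :
      (Lagrange.nodal (Icc 1 (p - 1)) fun i : ℕ => -(i : ZMod p)).degree = (p - 1 : ℕ) := by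
    rw [Lagrange.degree_nodal, Nat.card_Icc, Nat.add_sub_cancel]
  have hdegX : (X ^ (p - 1) - 1 : (ZMod p)[X]).degree = (p - 1 : ℕ) := by
    rw [← C_1, degree_X_pow_sub_C (by omega)]
  rw [hnodal]
  symm
  refine eq_of_degree_le_of_eval_index_eq _ hinj ?_ (hdegX.trans hdeg.symm) ?_ fun i hi => ?_
  · rw [hdegX, Nat.card_Icc, Nat.add_sub_cancel]
  · rw [Lagrange.nodal_monic.leadingCoeff, ← C_1]
    exact monic_X_pow_sub_C _ (by omega)
  · rw [Lagrange.eval_nodal_at_node (v := fun i : ℕ => -(i : ZMod p)) hi, eval_sub, eval_pow,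
      eval_X, eval_one, sub_eq_zero]
    refine ZMod.pow_card_sub_one_eq_one (neg_ne_zero.mpr ?_)
    rw [Ne, ZMod.natCast_eq_zero_iff]
    obtain ⟨hi1, hi2⟩ := mem_Icc.mp hi
    exact fun h => by have := Nat.le_of_dvd (by omega) h; omega

theorem prime_dvd_coeff_shiftedPochhammer {p m : ℕ} (hp : p.Prime) (hm0 : m ≠ 0)
    (hm : m < p - 1) : (p : ℤ) ∣ (shiftedPochhammer (p - 1)).coeff m := by
  have := Fact.mk hp
  have h := congrArg (coeff · m) (map_shiftedPochhammer_zmod (p := p))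
  simp only [coeff_map, coeff_sub, coeff_X_pow, coeff_one, if_neg hm.ne, if_neg hm0,
    sub_zero] at h
  exact (ZMod.intCast_zmod_eq_zero_iff_dvd _ p).mp h

theorem eval_neg_succ_shiftedPochhammer {n : ℕ} (hn : Even n) :
    (shiftedPochhammer n).eval (-((n : ℤ) + 1)) = (shiftedPochhammer n).eval 0 := by
  have hreflect : ∏ i ∈ Icc 1 n, (-((n : ℤ) + 1) + i) = ∏ j ∈ Icc 1 n, -(j : ℤ) := by
    refine prod_nbij' (fun i => n + 1 - i) (fun j => n + 1 - j) ?_ ?_ ?_ ?_ ?_ <;>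
      intro i hi <;> obtain ⟨hi1, hi2⟩ := mem_Icc.mp hi
    · exact mem_Icc.mpr ⟨by omega, by omega⟩
    · exact mem_Icc.mpr ⟨by omega, by omega⟩
    · omega
    · omega
    · push_cast [Nat.cast_sub (by omega : i ≤ n + 1)]
      ring
  rw [eval_shiftedPochhammer, eval_shiftedPochhammer, hreflect, prod_neg, Nat.card_Icc,
    Nat.add_sub_cancel, hn.neg_one_pow, one_mul]
  simp

theorem pow_sub_dvd_coeff_shiftedPochhammer_of_two_le {p m : ℕ} (hp : p.Prime) (hp3 : 3 < p)
    (hm : 2 ≤ m) : (p : ℤ) ^ (2 + 1 - m) ∣ (shiftedPochhammer (p - 1)).coeff m := by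
  rcases (show m = 2 ∨ 3 ≤ m by omega) with rfl | hm3
  · simpa using prime_dvd_coeff_shiftedPochhammer hp two_ne_zero (by omega)
  · simp [Nat.sub_eq_zero_of_le hm3]

theorem sq_dvd_coeff_one_shiftedPochhammer {p : ℕ} (hp : p.Prime) (hp3 : 3 < p) :
    (p : ℤ) ^ 2 ∣ (shiftedPochhammer (p - 1)).coeff 1 := by
  set f := shiftedPochhammer (p - 1)
  have hsym : f.eval (-(p : ℤ)) = f.eval 0 := by
    have := eval_neg_succ_shiftedPochhammer (hp.even_sub_one (by omega))
    rwa [Nat.cast_sub hp.one_le, Nat.cast_one, sub_add_cancel] at this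
  -- Without its linear term, `f` satisfies the divisibility lemma at `-p` and `0`,
  -- which then reads `p³ ∣ p c₁`.
  have hcoeff : ∀ m ≠ 0, (p : ℤ) ^ (2 + 1 - m) ∣ (f - C (f.coeff 1) * X).coeff m := by
    intro m hm
    rw [coeff_sub, coeff_C_mul_X]
    rcases (show m = 1 ∨ 2 ≤ m by omega) with rfl | hm2
    · simp
    · rw [if_neg (by omega), sub_zero]
      exact pow_sub_dvd_coeff_shiftedPochhammer_of_two_le hp hp3 hm2
  have h := (f - C (f.coeff 1) * X).pow_mul_sub_dvd_eval_sub_eval hcoeff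
    (dvd_neg.mpr dvd_rfl) (dvd_zero _)
  have hdiff : (f - C (f.coeff 1) * X).eval (-(p : ℤ)) - (f - C (f.coeff 1) * X).eval 0
      = f.coeff 1 * p := by
    simp only [eval_sub, eval_mul, eval_C, eval_X, hsym]
    ring
  rw [hdiff, sub_zero, mul_neg, neg_dvd] at h
  exact (mul_dvd_mul_iff_right (by exact_mod_cast hp.ne_zero)).mp h

theorem pow_sub_dvd_coeff_shiftedPochhammer {p : ℕ} (hp : p.Prime) (hp3 : 3 < p) :
    ∀ m ≠ 0, (p : ℤ) ^ (2 + 1 - m) ∣ (shiftedPochhammer (p - 1)).coeff m := by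
  intro m hm
  rcases (show m = 1 ∨ 2 ≤ m by omega) with rfl | hm2
  · exact sq_dvd_coeff_one_shiftedPochhammer hp hp3
  · exact pow_sub_dvd_coeff_shiftedPochhammer_of_two_le hp hp3 hm2

theorem stmt_16 (p : ℕ) (hp : p.Prime) (hp3 : 3 < p) (k : ℕ) (e : ℕ) (he : 1 ≤ e)
    (b : ℤ) :
    (∏ i ∈ Finset.Icc 1 (p - 1), ((p : ℤ) * k + i)) ≡
      (∏ i ∈ Finset.Icc 1 (p - 1), ((p : ℤ) * k + i - b * (p : ℤ) ^ e))
      [ZMOD (p : ℕ) ^ (e + 2)] := by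
  have hx : (p : ℤ) ∣ p * k - b * p ^ e :=
    dvd_sub (dvd_mul_right _ _) (dvd_mul_of_dvd_right (dvd_pow_self _ (by omega)) _)
  have key := (shiftedPochhammer (p - 1)).pow_mul_sub_dvd_eval_sub_eval
    (pow_sub_dvd_coeff_shiftedPochhammer hp hp3) hx (dvd_mul_right (p : ℤ) k)
  simp only [eval_shiftedPochhammer, sub_add_eq_add_sub] at key
  rw [Int.modEq_iff_dvd]
  exact dvd_trans ⟨-b, by ring⟩ key
end
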